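/- arXiv:1710.05694 — 8 statements merged into one kernel-verified Lean document; each statement's English description precedes it below -/
import Mathlib

section
/- Let α ∈ (−1/2, 1/2) and set C_α := ∫_ℝ ((1−x)_+^α − (−x)_+^α)² dx (a finite constant). Then for all real numbers u and t, ∫_ℝ ((t−s)_+^α − (u−s)_+^α)² ds = C_α · |t−u|^{2α+1}. -/
open MeasureTheory Set Filter

lemma posPart_rpow_mul' (α c y : ℝ) (hc : 0 < c) :
    (if 0 < c * y then (c * y) ^ α else 0) = c ^ α * (if 0 < y then y ^ α else 0) := by
  by_cases hy : 0 < y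
  · rw [if_pos hy, if_pos (mul_pos hc hy), Real.mul_rpow hc.le hy.le]
  · rw [if_neg hy, if_neg (fun h => hy ((mul_pos_iff_of_pos_left hc).mp h)), mul_zero]

lemma stmt1_aux (α : ℝ) (u t : ℝ) (h : u < t) :
    (∫ s : ℝ,
      ((if 0 < t - s then (t - s) ^ α else 0) - (if 0 < u - s then (u - s) ^ α else 0)) ^ 2)
      = (∫ x : ℝ,
          ((if 0 < 1 - x then (1 - x) ^ α else 0) - (if 0 < -x then (-x) ^ α else 0)) ^ 2)
        * (t - u) ^ (2 * α + 1) := by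
  set c := t - u with hc
  have hcpos : 0 < c := sub_pos.mpr h
  have hc0 : c ≠ 0 := hcpos.ne'
  set g : ℝ → ℝ := fun x =>
    ((if 0 < 1 - x then (1 - x) ^ α else 0) - (if 0 < -x then (-x) ^ α else 0)) ^ 2 with hg
  have hsq : (c ^ α) ^ 2 = c ^ (2 * α) := by
    rw [← Real.rpow_natCast (c ^ α) 2, ← Real.rpow_mul hcpos.le]
    norm_num [mul_comm]
  have key : ∀ s : ℝ,
      ((if 0 < t - s then (t - s) ^ α else 0) - (if 0 < u - s then (u - s) ^ α else 0)) ^ 2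
        = c ^ (2 * α) * g ((s - u) / c) := by
    intro s
    have h1 : t - s = c * (1 - (s - u) / c) := by
      rw [hc]; field_simp [sub_ne_zero.mpr h.ne']; ring
    have h2 : u - s = c * (-((s - u) / c)) := by
      rw [hc]; field_simp [sub_ne_zero.mpr h.ne']; ring
    rw [h1, h2, posPart_rpow_mul' α c _ hcpos, posPart_rpow_mul' α c _ hcpos, hg]
    simp only [← mul_sub]
    rw [mul_pow, hsq]
  simp_rw [key]
  rw [integral_const_mul]
  have step : (∫ s : ℝ, g ((s - u) / c)) = |c| • ∫ x : ℝ, g x := by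
    have h3 := integral_add_right_eq_self (μ := (volume : Measure ℝ)) (fun s => g (s / c)) (-u)
    calc (∫ s : ℝ, g ((s - u) / c)) = ∫ s : ℝ, g ((s + -u) / c) := by
            simp_rw [sub_eq_add_neg]
      _ = ∫ s : ℝ, g (s / c) := h3
      _ = |c| • ∫ x : ℝ, g x := MeasureTheory.Measure.integral_comp_div g c
  rw [step, abs_of_pos hcpos, smul_eq_mul, Real.rpow_add hcpos, Real.rpow_one]
  ring

/-- Let `α ∈ (−1/2, 1/2)` and `C_α := ∫_ℝ ((1−x)_+^α − (−x)_+^α)² dx`.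
Then for all real `u`, `t`:
`∫_ℝ ((t−s)_+^α − (u−s)_+^α)² ds = C_α ⬝ |t−u|^(2α+1)`,
where `y_+^α := y^α` if `y > 0` and `0` otherwise. -/
theorem stmt1 (α : ℝ) (hα : α ∈ Set.Ioo (-(1/2) : ℝ) (1/2)) (u t : ℝ) :
    (∫ s : ℝ,
      ((if 0 < t - s then (t - s) ^ α else 0) - (if 0 < u - s then (u - s) ^ α else 0)) ^ 2)
      = (∫ x : ℝ,
          ((if 0 < 1 - x then (1 - x) ^ α else 0) - (if 0 < -x then (-x) ^ α else 0)) ^ 2)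
        * |t - u| ^ (2 * α + 1) := by
  rcases lt_trichotomy u t with h | h | h
  · rw [abs_of_pos (sub_pos.mpr h)]
    exact stmt1_aux α u t h
  · subst h
    simp only [sub_self, abs_zero]
    rw [Real.zero_rpow (by nlinarith [hα.1] : (2:ℝ) * α + 1 ≠ 0), mul_zero]
    simp
  · have h' := stmt1_aux α t u h
    rw [abs_sub_comm, abs_of_pos (sub_pos.mpr h), ← h']
    congr 1
    ext s
    ring
end

section
/- Let α ∈ (−1/2, 1/2), λ > 0 and t ∈ ℝ. For each s < t the integral ∫_s^t e^{λu} |K_α(u,s)| du is finite, where K_α(u,s) := (u−s)_+^α − (−s)_+^α, and moreover ∫_{−∞}^t ( ∫_s^t e^{λu} |K_α(u,s)| du )² ds < ∞. -/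
open MeasureTheory Set Filter

private lemma key_mvt {α : ℝ} (hα : α ≤ 1) {m x y : ℝ} (hm : 0 < m) (hx : m ≤ x) (hy : m ≤ y) :
    |x ^ α - y ^ α| ≤ |α| * m ^ (α - 1) * |x - y| := by
  have key : ∀ a b : ℝ, m ≤ a → m ≤ b → a ≤ b → |b ^ α - a ^ α| ≤ |α| * m ^ (α - 1) * |b - a| := by
    intro a b ha hb hab
    rcases eq_or_lt_of_le hab with rfl | hab'
    · simp
    · have ha0 : 0 < a := lt_of_lt_of_le hm ha
      obtain ⟨c, hc, hc'⟩ := exists_hasDerivAt_eq_slope (fun z => z ^ α)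
        (fun z => α * z ^ (α - 1)) hab'
        (fun z hz => (Real.continuousAt_rpow_const z α
          (Or.inl (ne_of_gt (lt_of_lt_of_le ha0 hz.1)))).continuousWithinAt)
        (fun z hz => Real.hasDerivAt_rpow_const (Or.inl (ne_of_gt (lt_trans ha0 hz.1))))
      have hc0 : 0 < c := lt_trans ha0 hc.1
      have hcm : m ≤ c := le_trans ha hc.1.le
      have hslope : b ^ α - a ^ α = α * c ^ (α - 1) * (b - a) := by
        rw [hc', div_mul_cancel₀]
        exact ne_of_gt (by linarith)
      rw [hslope, abs_mul, abs_mul, abs_of_nonneg (Real.rpow_nonneg hc0.le _)]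
      have h2 : c ^ (α - 1) ≤ m ^ (α - 1) :=
        Real.rpow_le_rpow_of_nonpos hm hcm (by linarith)
      exact mul_le_mul_of_nonneg_right
        (mul_le_mul_of_nonneg_left h2 (abs_nonneg α)) (abs_nonneg _)
  rcases le_total y x with h | h
  · exact key y x hy hx h
  · rw [abs_sub_comm (x ^ α), abs_sub_comm x y]
    exact key x y hx hy h

private lemma help_exp_Iic {c b : ℝ} (hc : 0 < c) :
    IntegrableOn (fun x : ℝ => Real.exp (c * x)) (Iic b) := by
  have h1 : Integrable ((Iic (c * b)).indicator Real.exp) :=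
    (integrableOn_exp_Iic (c * b)).integrable_indicator measurableSet_Iic
  have h2 : Integrable fun x : ℝ => ((Iic (c * b)).indicator Real.exp) (c * x) :=
    (integrable_comp_mul_left_iff ((Iic (c * b)).indicator Real.exp) hc.ne').2 h1
  have h3 : (fun x : ℝ => ((Iic (c * b)).indicator Real.exp) (c * x))
      = (Iic b).indicator (fun x => Real.exp (c * x)) := by
    funext x
    simp only [Set.indicator, mem_Iic, mul_le_mul_iff_right₀ hc]
  rw [h3] at h2
  exact (integrable_indicator_iff measurableSet_Iic).1 h2

private lemma help_neg {f : ℝ → ℝ} {s : Set ℝ} (h : IntegrableOn f s) :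
    IntegrableOn (fun x : ℝ => f (-x)) (Neg.neg ⁻¹' s) := by
  have := (MeasurePreserving.integrableOn_comp_preimage
    (Measure.measurePreserving_neg (volume : Measure ℝ))
    (Homeomorph.neg ℝ).measurableEmbedding (f := f) (s := s)).2 h
  simpa [Function.comp_def] using this

private lemma int_Ioc_rpow {α a b : ℝ} (hα : -1 < α) (hab : a ≤ b) :
    ∫ u in Ioc a b, (u - a) ^ α = (b - a) ^ (α + 1) / (α + 1) := by
  rw [← intervalIntegral.integral_of_le hab]
  rw [intervalIntegral.integral_comp_sub_right (fun x => x ^ α) a, sub_self]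
  rw [integral_rpow (Or.inl hα), Real.zero_rpow (by linarith : α + 1 ≠ 0)]
  ring

private lemma intOn_rpow_sub {α a b : ℝ} (hα : -1 < α) (hab : a ≤ b) :
    IntegrableOn (fun u => (u - a) ^ α) (Ioc a b) := by
  rw [← intervalIntegrable_iff_integrableOn_Ioc_of_le hab]
  have := (intervalIntegral.intervalIntegrable_rpow' hα (a := 0) (b := b - a)).comp_sub_right a
  simpa using this

private lemma help_sq_exp {l s : ℝ} (hl : 0 < l) (hs : s ≤ 0) :
    s ^ 2 * Real.exp (l * s / 4) ≤ 64 / l ^ 2 := by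
  have hls : l * s ≤ 0 := mul_nonpos_of_nonneg_of_nonpos hl.le hs
  have hx : 0 ≤ -(l * s) / 4 := by linarith
  set x := -(l * s) / 4 with hxdef
  have h1 : x / 2 + 1 ≤ Real.exp (x / 2) := Real.add_one_le_exp (x / 2)
  have h2 : Real.exp x = Real.exp (x / 2) ^ 2 := by
    rw [sq, ← Real.exp_add]; congr 1; ring
  have h4 : (x / 2 + 1) ^ 2 ≤ Real.exp (x / 2) ^ 2 :=
    pow_le_pow_left₀ (by linarith) h1 2
  have h3 : x ^ 2 / 4 ≤ Real.exp x := by nlinarith [hx]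
  have h5 : Real.exp (l * s / 4) = (Real.exp x)⁻¹ := by
    rw [← Real.exp_neg]; congr 1; rw [hxdef]; ring
  rw [h5, ← div_eq_mul_inv, div_le_div_iff₀ (Real.exp_pos x) (by positivity)]
  have hx2 : x ^ 2 = l ^ 2 * s ^ 2 / 16 := by rw [hxdef]; ring
  linarith [h3]

private lemma help_exp_abs {l t u : ℝ} (hl : 0 < l) (hu : u ≤ t) :
    Real.exp (l * u) * |u| ≤
      (max (2 / l) (max t 0 * Real.exp (l * max t 0 / 2))) * Real.exp (l * u / 2) := by
  have key : |u| * Real.exp (l * u / 2) ≤ max (2 / l) (max t 0 * Real.exp (l * max t 0 / 2)) := by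
    rcases le_or_gt u 0 with h | h
    · refine le_trans ?_ (le_max_left _ _)
      rw [abs_of_nonpos h]
      have h1 : -(l * u / 2) + 1 ≤ Real.exp (-(l * u / 2)) := Real.add_one_le_exp _
      have h2 : Real.exp (-(l * u / 2)) * Real.exp (l * u / 2) = 1 := by
        rw [← Real.exp_add]; simp
      have h3 := mul_le_mul_of_nonneg_right h1 (Real.exp_pos (l * u / 2)).le
      rw [h2] at h3
      rw [le_div_iff₀ hl]
      nlinarith [Real.exp_pos (l * u / 2)]
    · refine le_trans ?_ (le_max_right _ _)
      rw [abs_of_pos h]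
      have h1 : u ≤ max t 0 := le_trans hu (le_max_left _ _)
      have h2 : Real.exp (l * u / 2) ≤ Real.exp (l * max t 0 / 2) := by
        apply Real.exp_le_exp.2
        have := mul_le_mul_of_nonneg_left h1 hl.le
        linarith
      exact mul_le_mul h1 h2 (Real.exp_pos _).le (le_trans h.le h1)
  calc Real.exp (l * u) * |u|
      = (|u| * Real.exp (l * u / 2)) * Real.exp (l * u / 2) := by
        rw [show l * u = l * u / 2 + l * u / 2 by ring, Real.exp_add]; ring
    _ ≤ _ := mul_le_mul_of_nonneg_right key (Real.exp_pos _).le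

private lemma meas_ite_rpow {δ : Type*} [MeasurableSpace δ] {g : δ → ℝ} (hg : Measurable g)
    (α : ℝ) : Measurable (fun x => if 0 < g x then g x ^ α else 0) := by
  have heq : (fun x => if 0 < g x then g x ^ α else 0)
      = fun x => if 0 < g x then Real.exp (Real.log (g x) * α) else 0 := by
    funext x; split_ifs with h
    · rw [Real.rpow_def_of_pos h]
    · rfl
  rw [heq]
  exact Measurable.ite (measurableSet_lt measurable_const hg)
    (Real.measurable_exp.comp ((Real.measurable_log.comp hg).mul_const α)) measurable_const

set_option maxHeartbeats 2000000 in
/-- Let `α ∈ (−1/2, 1/2)`, `λ > 0` and `t ∈ ℝ`. For each `s < t` the integral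
`∫_s^t e^{λu} |K_α(u,s)| du` is finite, where
`K_α(u,s) := (u−s)_+^α − (−s)_+^α`, and moreover
`∫_{−∞}^t (∫_s^t e^{λu} |K_α(u,s)| du)² ds < ∞`. -/
theorem stmt3 (α l t : ℝ) (hα : α ∈ Set.Ioo (-(1/2) : ℝ) (1/2)) (hl : 0 < l) :
    (∀ s < t, MeasureTheory.IntegrableOn
      (fun u => Real.exp (l * u) *
        |(if 0 < u - s then (u - s) ^ α else 0) - (if 0 < -s then (-s) ^ α else 0)|)
      (Set.Ioc s t)) ∧
    MeasureTheory.IntegrableOn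
      (fun s => (∫ u in Set.Ioc s t, Real.exp (l * u) *
        |(if 0 < u - s then (u - s) ^ α else 0) - (if 0 < -s then (-s) ^ α else 0)|) ^ 2)
      (Set.Iio t) := by
  obtain ⟨hα1, hα2⟩ := hα
  have hαm1 : (-1 : ℝ) < α := by linarith
  have hα1' : (0 : ℝ) < α + 1 := by linarith
  have hcnn : ∀ s : ℝ, 0 ≤ (if 0 < -s then (-s) ^ α else 0) := by
    intro s; split_ifs with h
    · exact Real.rpow_nonneg h.le α
    · exact le_rfl
  have hmeas : ∀ s : ℝ, Measurable (fun u => Real.exp (l * u) *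
      |(if 0 < u - s then (u - s) ^ α else 0) - (if 0 < -s then (-s) ^ α else 0)|) := fun s =>
    (Real.measurable_exp.comp (measurable_id.const_mul l)).mul
      (((meas_ite_rpow (measurable_id.sub measurable_const) α).sub measurable_const).abs)
  have part1 : ∀ s, s < t → IntegrableOn (fun u => Real.exp (l * u) *
      |(if 0 < u - s then (u - s) ^ α else 0) - (if 0 < -s then (-s) ^ α else 0)|) (Ioc s t) := by
    intro s hst
    have hbd : IntegrableOn (fun u => Real.exp (l * t) *
        ((u - s) ^ α + |if 0 < -s then (-s) ^ α else 0|)) (Ioc s t) :=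
      ((intOn_rpow_sub hαm1 hst.le).add
        (integrableOn_const measure_Ioc_lt_top.ne)).const_mul _
    refine Integrable.mono' hbd ((hmeas s).aestronglyMeasurable) ?_
    rw [ae_restrict_iff' measurableSet_Ioc]
    refine Eventually.of_forall fun u hu => ?_
    rw [Real.norm_eq_abs, abs_of_nonneg (by positivity), if_pos (sub_pos.2 hu.1)]
    refine mul_le_mul (Real.exp_le_exp.2 (mul_le_mul_of_nonneg_left hu.2 hl.le)) ?_
      (abs_nonneg _) (Real.exp_pos _).le
    rw [sub_eq_add_neg]
    refine (abs_add_le _ _).trans ?_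
    rw [abs_neg, abs_of_nonneg (Real.rpow_nonneg (sub_pos.2 hu.1).le α)]
  set S0 : ℝ := min (2 * t) (-2 : ℝ) with hS0def
  have hS0a : S0 ≤ 2 * t := min_le_left _ _
  have hS0b : S0 ≤ -2 := min_le_right _ _
  have hS0t : S0 < t := by
    by_contra h
    push_neg at h
    linarith
  have claim_tail : ∀ s, s ≤ S0 →
      (∫ u in Ioc s t, Real.exp (l * u) *
        |(if 0 < u - s then (u - s) ^ α else 0) - (if 0 < -s then (-s) ^ α else 0)|)
      ≤ 192 / l ^ 2 * Real.exp (l * s / 4)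
        + (|α| * (max (2 / l) (max t 0 * Real.exp (l * max t 0 / 2)))
            * (2 / l * Real.exp (l * t / 2))) * (-s / 2) ^ (α - 1) := by
    intro s hs
    set C3 := max (2 / l) (max t 0 * Real.exp (l * max t 0 / 2)) with hC3def
    have hC3p : (0 : ℝ) < C3 := lt_of_lt_of_le (by positivity) (le_max_left _ _)
    have hs2t : s ≤ 2 * t := le_trans hs hS0a
    have hsm2 : s ≤ -2 := le_trans hs hS0b
    have hst : s < t := lt_of_le_of_lt hs hS0t
    have hhalf : s < s / 2 := by linarith
    have hhalft : s / 2 ≤ t := by linarith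
    have hnegs : (0 : ℝ) < -s := by linarith
    have hs2p : (0 : ℝ) < -s / 2 := by linarith
    have hI1 := (part1 s hst).mono_set (Ioc_subset_Ioc_right hhalft)
    have hI2 := (part1 s hst).mono_set (Ioc_subset_Ioc_left hhalf.le)
    rw [← Ioc_union_Ioc_eq_Ioc hhalf.le hhalft,
        setIntegral_union (Ioc_disjoint_Ioc_of_le le_rfl) measurableSet_Ioc hI1 hI2]
    refine add_le_add ?_ ?_
    · -- A part
      have hbnd : ∀ u ∈ Ioc s (s / 2), Real.exp (l * u) *
          |(if 0 < u - s then (u - s) ^ α else 0) - (if 0 < -s then (-s) ^ α else 0)|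
          ≤ Real.exp (l * s / 2) * ((u - s) ^ α + (-s) ^ α) := by
        intro u hu
        rw [if_pos (sub_pos.2 hu.1), if_pos hnegs]
        refine mul_le_mul (Real.exp_le_exp.2 ?_) ?_ (abs_nonneg _) (Real.exp_pos _).le
        · have := mul_le_mul_of_nonneg_left hu.2 hl.le; linarith
        · rw [sub_eq_add_neg]
          refine (abs_add_le _ _).trans ?_
          rw [abs_neg, abs_of_nonneg (Real.rpow_nonneg (sub_pos.2 hu.1).le α),
              abs_of_nonneg (Real.rpow_nonneg hnegs.le α)]
      have hRint : IntegrableOn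
          (fun u => Real.exp (l * s / 2) * ((u - s) ^ α + (-s) ^ α)) (Ioc s (s / 2)) :=
        ((intOn_rpow_sub hαm1 hhalf.le).add
          (integrableOn_const measure_Ioc_lt_top.ne)).const_mul _
      refine le_trans (setIntegral_mono_on hI1 hRint measurableSet_Ioc hbnd) ?_
      have hcomp : ∫ u in Ioc s (s / 2), Real.exp (l * s / 2) * ((u - s) ^ α + (-s) ^ α)
          = Real.exp (l * s / 2) * ((-s / 2) ^ (α + 1) / (α + 1) + (s / 2 - s) * (-s) ^ α) := by
        rw [MeasureTheory.integral_const_mul,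
            integral_add (intOn_rpow_sub hαm1 hhalf.le)
              (integrableOn_const measure_Ioc_lt_top.ne),
            int_Ioc_rpow hαm1 hhalf.le, setIntegral_const,
            Real.volume_real_Ioc_of_le (by linarith), smul_eq_mul,
            show s / 2 - s = -s / 2 by ring]
      rw [hcomp]
      have hb1 : (0 : ℝ) ≤ -s / 2 := by linarith
      have h1 : (-s / 2) ^ (α + 1) ≤ (-s) ^ (α + 1) :=
        Real.rpow_le_rpow hb1 (by linarith) (by linarith)
      have h2 : (-s) ^ (α + 1) ≤ s ^ 2 := by
        have h2a : (-s) ^ (α + 1) ≤ (-s) ^ ((2 : ℕ) : ℝ) :=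
          Real.rpow_le_rpow_of_exponent_le (by linarith) (by push_cast; linarith)
        rwa [Real.rpow_natCast, neg_sq] at h2a
      have h3 : (-s) ^ α * (-s) = (-s) ^ (α + 1) := (Real.rpow_add_one (by linarith) α).symm
      have h4 : (s / 2 - s) * (-s) ^ α ≤ s ^ 2 := by
        have h4a : (s / 2 - s) * (-s) ^ α ≤ (-s) * (-s) ^ α :=
          mul_le_mul_of_nonneg_right (by linarith) (Real.rpow_nonneg hnegs.le α)
        nlinarith [h4a, h2, h3]
      have h5 : (-s / 2) ^ (α + 1) / (α + 1) ≤ 2 * s ^ 2 := by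
        rw [div_le_iff₀ hα1']
        nlinarith [h1, h2, sq_nonneg s]
      have h6 : Real.exp (l * s / 2) * ((-s / 2) ^ (α + 1) / (α + 1) + (s / 2 - s) * (-s) ^ α)
          ≤ Real.exp (l * s / 2) * (3 * s ^ 2) :=
        mul_le_mul_of_nonneg_left (by linarith) (Real.exp_pos _).le
      refine h6.trans ?_
      have h7 : Real.exp (l * s / 2) * (3 * s ^ 2)
          = 3 * (s ^ 2 * Real.exp (l * s / 4)) * Real.exp (l * s / 4) := by
        rw [show l * s / 2 = l * s / 4 + l * s / 4 by ring, Real.exp_add]; ring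
      rw [h7]
      calc 3 * (s ^ 2 * Real.exp (l * s / 4)) * Real.exp (l * s / 4)
          ≤ 3 * (64 / l ^ 2) * Real.exp (l * s / 4) :=
            mul_le_mul_of_nonneg_right
              (mul_le_mul_of_nonneg_left (help_sq_exp hl (by linarith)) (by norm_num))
              (Real.exp_pos _).le
        _ = 192 / l ^ 2 * Real.exp (l * s / 4) := by ring
    · -- B part
      have hbnd : ∀ u ∈ Ioc (s / 2) t, Real.exp (l * u) *
          |(if 0 < u - s then (u - s) ^ α else 0) - (if 0 < -s then (-s) ^ α else 0)|
          ≤ (|α| * C3 * (-s / 2) ^ (α - 1)) * Real.exp (l * u / 2) := by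
        intro u hu
        have hu1 : s / 2 < u := hu.1
        rw [if_pos (by linarith : 0 < u - s), if_pos hnegs]
        have hm := key_mvt (by linarith : α ≤ 1) hs2p
          (by linarith : -s / 2 ≤ u - s) (by linarith : -s / 2 ≤ -s)
        rw [show u - s - -s = u by ring] at hm
        calc Real.exp (l * u) * |(u - s) ^ α - (-s) ^ α|
            ≤ Real.exp (l * u) * (|α| * (-s / 2) ^ (α - 1) * |u|) :=
              mul_le_mul_of_nonneg_left hm (Real.exp_pos _).le
          _ = (|α| * (-s / 2) ^ (α - 1)) * (Real.exp (l * u) * |u|) := by ring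
          _ ≤ (|α| * (-s / 2) ^ (α - 1)) * (C3 * Real.exp (l * u / 2)) := by
              refine mul_le_mul_of_nonneg_left ?_
                (mul_nonneg (abs_nonneg α) (Real.rpow_nonneg hs2p.le _))
              rw [hC3def]
              exact help_exp_abs hl hu.2
          _ = (|α| * C3 * (-s / 2) ^ (α - 1)) * Real.exp (l * u / 2) := by ring
      have hcont : Continuous fun u : ℝ => (|α| * C3 * (-s / 2) ^ (α - 1)) * Real.exp (l * u / 2) :=
        continuous_const.mul
          (Real.continuous_exp.comp ((continuous_const.mul continuous_id).div_const 2))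
      refine le_trans (setIntegral_mono_on hI2 (hcont.integrableOn_Ioc) measurableSet_Ioc hbnd) ?_
      rw [MeasureTheory.integral_const_mul,
          show |α| * C3 * (2 / l * Real.exp (l * t / 2)) * (-s / 2) ^ (α - 1)
            = (|α| * C3 * (-s / 2) ^ (α - 1)) * (2 / l * Real.exp (l * t / 2)) by ring]
      refine mul_le_mul_of_nonneg_left ?_
        (mul_nonneg (mul_nonneg (abs_nonneg α) hC3p.le) (Real.rpow_nonneg hs2p.le _))
      rw [← intervalIntegral.integral_of_le hhalft]
      have hderiv : ∀ x ∈ uIcc (s / 2) t,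
          HasDerivAt (fun y => 2 / l * Real.exp (l * y / 2)) (Real.exp (l * x / 2)) x := by
        intro x _
        have h0 : HasDerivAt (fun y : ℝ => l * y / 2) (l / 2) x := by
          simpa using (HasDerivAt.const_mul l (hasDerivAt_id x)).div_const 2
        have h1 := (h0.exp).const_mul (2 / l)
        refine h1.congr_deriv ?_
        rw [mul_comm (Real.exp _) (l / 2), ← mul_assoc, div_mul_div_comm, mul_comm 2 l,
          div_self (mul_ne_zero hl.ne' two_ne_zero), one_mul]
      rw [intervalIntegral.integral_eq_sub_of_hasDerivAt hderiv
        ((Real.continuous_exp.comp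
          ((continuous_const.mul continuous_id).div_const 2)).intervalIntegrable _ _)]
      have he1 := Real.exp_pos (l * (s / 2) / 2)
      have h2l : (0 : ℝ) < 2 / l := by positivity
      nlinarith [mul_pos h2l he1]
  have claim_easy : ∀ s, S0 ≤ s → s < t →
      (∫ u in Ioc s t, Real.exp (l * u) *
        |(if 0 < u - s then (u - s) ^ α else 0) - (if 0 < -s then (-s) ^ α else 0)|)
      ≤ Real.exp (l * t) * ((t - S0) ^ (α + 1) / (α + 1))
        + Real.exp (l * t) * (t - S0) * (if 0 < -s then (-s) ^ α else 0) := by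
    intro s hs0 hst
    have hbnd : ∀ u ∈ Ioc s t, Real.exp (l * u) *
        |(if 0 < u - s then (u - s) ^ α else 0) - (if 0 < -s then (-s) ^ α else 0)|
        ≤ Real.exp (l * t) * ((u - s) ^ α + (if 0 < -s then (-s) ^ α else 0)) := by
      intro u hu
      rw [if_pos (sub_pos.2 hu.1)]
      refine mul_le_mul (Real.exp_le_exp.2 (mul_le_mul_of_nonneg_left hu.2 hl.le)) ?_
        (abs_nonneg _) (Real.exp_pos _).le
      rw [sub_eq_add_neg]
      refine (abs_add_le _ _).trans ?_
      rw [abs_neg, abs_of_nonneg (Real.rpow_nonneg (sub_pos.2 hu.1).le α),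
          abs_of_nonneg (hcnn s)]
    have hRint : IntegrableOn (fun u => Real.exp (l * t) *
        ((u - s) ^ α + (if 0 < -s then (-s) ^ α else 0))) (Ioc s t) :=
      ((intOn_rpow_sub hαm1 hst.le).add
        (integrableOn_const measure_Ioc_lt_top.ne)).const_mul _
    refine le_trans (setIntegral_mono_on (part1 s hst) hRint measurableSet_Ioc hbnd) ?_
    have hcomp : ∫ u in Ioc s t, Real.exp (l * t) *
        ((u - s) ^ α + (if 0 < -s then (-s) ^ α else 0))
        = Real.exp (l * t) * ((t - s) ^ (α + 1) / (α + 1)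
            + (t - s) * (if 0 < -s then (-s) ^ α else 0)) := by
      rw [MeasureTheory.integral_const_mul,
          integral_add (intOn_rpow_sub hαm1 hst.le)
            (integrableOn_const measure_Ioc_lt_top.ne),
          int_Ioc_rpow hαm1 hst.le, setIntegral_const,
          Real.volume_real_Ioc_of_le (by linarith), smul_eq_mul]
    rw [hcomp]
    have h1 : (t - s) ^ (α + 1) ≤ (t - S0) ^ (α + 1) :=
      Real.rpow_le_rpow (by linarith) (by linarith) (by linarith)
    have h2 : t - s ≤ t - S0 := by linarith
    have hc := hcnn s
    have hE := Real.exp_pos (l * t)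
    have h3 : (t - s) ^ (α + 1) / (α + 1) ≤ (t - S0) ^ (α + 1) / (α + 1) := by gcongr
    nlinarith [mul_le_mul_of_nonneg_left h3 hE.le,
      mul_le_mul_of_nonneg_left (mul_le_mul_of_nonneg_right h2 hc) hE.le]
  set K2 : ℝ := |α| * (max (2 / l) (max t 0 * Real.exp (l * max t 0 / 2)))
      * (2 / l * Real.exp (l * t / 2)) with hK2def
  have hK2nn : 0 ≤ K2 := by
    refine mul_nonneg (mul_nonneg (abs_nonneg α) ?_) (by positivity)
    exact le_trans (by positivity) (le_max_left _ _)
  set M1 : ℝ := Real.exp (l * t) * ((t - S0) ^ (α + 1) / (α + 1)) with hM1def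
  set M2 : ℝ := Real.exp (l * t) * (t - S0) with hM2def
  have hM1nn : 0 ≤ M1 :=
    mul_nonneg (Real.exp_pos _).le (div_nonneg (Real.rpow_nonneg (by linarith) _) hα1'.le)
  have hM2nn : 0 ≤ M2 := mul_nonneg (Real.exp_pos _).le (by linarith)
  set G : ℝ → ℝ := fun s => if s ≤ S0 then
      2 * (192 / l ^ 2 * Real.exp (l * s / 4)) ^ 2 + 2 * (K2 * (-s / 2) ^ (α - 1)) ^ 2
    else 2 * M1 ^ 2 + 2 * M2 ^ 2 * (if 0 < -s then ((-s) ^ α) ^ 2 else 0) with hGdef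
  have hGint : IntegrableOn G (Iio t) := by
    have hiic : IntegrableOn G (Iic S0) := by
      have ha : IntegrableOn
          (fun s : ℝ => 2 * (192 / l ^ 2) ^ 2 * Real.exp (l / 2 * s)) (Iic S0) :=
        (help_exp_Iic (by positivity : (0 : ℝ) < l / 2)).const_mul _
      have hb0 : IntegrableOn (fun x : ℝ => x ^ (2 * α - 2)) (Ici (-S0)) :=
        (integrableOn_Ici_iff_integrableOn_Ioi (f := fun x : ℝ => x ^ (2 * α - 2))).2
          (integrableOn_Ioi_rpow_of_lt (by linarith) (by linarith : (0 : ℝ) < -S0))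
      have hb1 := help_neg hb0
      have hpre : (Neg.neg ⁻¹' Ici (-S0) : Set ℝ) = Iic S0 := by
        ext x
        simp only [Set.mem_preimage, Set.mem_Ici, Set.mem_Iic, neg_le_neg_iff]
      rw [hpre] at hb1
      have hb : IntegrableOn
          (fun s : ℝ => (2 * K2 ^ 2 * (1 / 2 : ℝ) ^ (2 * α - 2)) * (-s) ^ (2 * α - 2))
          (Iic S0) := hb1.const_mul _
      refine IntegrableOn.congr_fun (ha.add hb) (fun s hs => ?_) measurableSet_Iic
      simp only [Pi.add_apply]
      simp only [Set.mem_Iic] at hs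
      have hns : (0 : ℝ) < -s := by linarith
      have hns2 : (0 : ℝ) < -s / 2 := by linarith
      have e1 : Real.exp (l * s / 4) ^ 2 = Real.exp (l / 2 * s) := by
        rw [sq, ← Real.exp_add]; congr 1; ring
      have e2 : ((-s / 2 : ℝ) ^ (α - 1)) ^ 2 = (1 / 2 : ℝ) ^ (2 * α - 2) * (-s) ^ (2 * α - 2) := by
        rw [sq, ← Real.rpow_add hns2, show (α - 1) + (α - 1) = 2 * α - 2 by ring,
            show (-s / 2 : ℝ) = (1 / 2 : ℝ) * (-s) by ring,
            Real.mul_rpow (by norm_num) hns.le]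
      simp only [hGdef]
      rw [if_pos hs, mul_pow (192 / l ^ 2) (Real.exp (l * s / 4)) 2,
          mul_pow K2 ((-s / 2) ^ (α - 1)) 2, e1, e2]
      ring
    have hioo : IntegrableOn G (Ioo S0 t) := by
      have hq0 : IntegrableOn (fun x : ℝ => x ^ (2 * α)) (Ioc 0 (-S0)) := by
        rw [← intervalIntegrable_iff_integrableOn_Ioc_of_le (by linarith : (0 : ℝ) ≤ -S0)]
        exact intervalIntegral.intervalIntegrable_rpow' (by linarith)
      have hq1 := help_neg hq0
      have hpre : (Neg.neg ⁻¹' Ioc 0 (-S0) : Set ℝ) = Ico S0 0 := by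
        ext x
        simp only [Set.mem_preimage, Set.mem_Ioc, Set.mem_Ico]
        constructor
        · rintro ⟨h1, h2⟩; constructor <;> linarith
        · rintro ⟨h1, h2⟩; constructor <;> linarith
      rw [hpre] at hq1
      have hq : IntegrableOn (fun s : ℝ => ((-s) ^ α) ^ 2) (Ico S0 0) := by
        refine hq1.congr_fun (fun s hs => ?_) measurableSet_Ico
        simp only [Set.mem_Ico] at hs
        have hns : (0 : ℝ) < -s := by linarith [hs.2]
        rw [sq, ← Real.rpow_add hns, two_mul]
      have hind : IntegrableOn
          (fun s : ℝ => (if 0 < -s then ((-s) ^ α) ^ 2 else 0)) (Ioo S0 t) := by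
        have heq2 : (fun s : ℝ => (if 0 < -s then ((-s) ^ α) ^ 2 else 0))
            = (Iio (0 : ℝ)).indicator (fun s => ((-s) ^ α) ^ 2) := by
          funext s
          by_cases h : s < 0
          · rw [Set.indicator_of_mem (Set.mem_Iio.2 h), if_pos (by linarith)]
          · rw [Set.indicator_of_notMem (by simpa using h), if_neg (by
              intro hc; exact h (by linarith))]
        rw [IntegrableOn, heq2, integrable_indicator_iff measurableSet_Iio, IntegrableOn,
            Measure.restrict_restrict measurableSet_Iio]
        refine hq.mono_set ?_
        rintro x ⟨hx1, hx2, _⟩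
        exact ⟨le_of_lt hx2, hx1⟩
      refine IntegrableOn.congr_fun
        ((integrableOn_const measure_Ioo_lt_top.ne :
            IntegrableOn (fun _ : ℝ => 2 * M1 ^ 2) (Ioo S0 t) volume).add
          (hind.const_mul (2 * M2 ^ 2)))
        (fun s hs => ?_) measurableSet_Ioo
      simp only [Pi.add_apply]
      simp only [Set.mem_Ioo] at hs
      simp only [hGdef]
      rw [if_neg (not_le.2 hs.1)]
    refine (hiic.union hioo).mono_set ?_
    intro x hx
    by_cases h : x ≤ S0
    · exact Or.inl h
    · exact Or.inr ⟨not_le.1 h, hx⟩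
  have hjoint : Measurable (fun q : ℝ × ℝ => Real.exp (l * q.2) *
      |(if 0 < q.2 - q.1 then (q.2 - q.1) ^ α else 0) - (if 0 < -q.1 then (-q.1) ^ α else 0)|) :=
    (Real.measurable_exp.comp (measurable_snd.const_mul l)).mul
      (((meas_ite_rpow (measurable_snd.sub measurable_fst) α).sub
        (meas_ite_rpow measurable_fst.neg α)).abs)
  have hsetm : MeasurableSet {q : ℝ × ℝ | q.1 < q.2 ∧ q.2 ≤ t} :=
    (measurableSet_lt measurable_fst measurable_snd).inter
      (measurableSet_le measurable_snd measurable_const)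
  have hFsm := ((hjoint.indicator hsetm).stronglyMeasurable).integral_prod_right'
    (ν := (volume : Measure ℝ))
  have heq : (fun s => ∫ u, ({q : ℝ × ℝ | q.1 < q.2 ∧ q.2 ≤ t}.indicator
        (fun q : ℝ × ℝ => Real.exp (l * q.2) *
          |(if 0 < q.2 - q.1 then (q.2 - q.1) ^ α else 0) -
            (if 0 < -q.1 then (-q.1) ^ α else 0)|)) (s, u))
      = fun s => ∫ u in Ioc s t, Real.exp (l * u) *
          |(if 0 < u - s then (u - s) ^ α else 0) - (if 0 < -s then (-s) ^ α else 0)| := by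
    funext s
    have hfun : (fun u => ({q : ℝ × ℝ | q.1 < q.2 ∧ q.2 ≤ t}.indicator
        (fun q : ℝ × ℝ => Real.exp (l * q.2) *
          |(if 0 < q.2 - q.1 then (q.2 - q.1) ^ α else 0) -
            (if 0 < -q.1 then (-q.1) ^ α else 0)|)) (s, u))
        = (Ioc s t).indicator (fun u => Real.exp (l * u) *
          |(if 0 < u - s then (u - s) ^ α else 0) - (if 0 < -s then (-s) ^ α else 0)|) := by
      funext u
      by_cases h : u ∈ Ioc s t
      · rw [Set.indicator_of_mem h, Set.indicator_of_mem (by exact ⟨h.1, h.2⟩)]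
      · rw [Set.indicator_of_notMem h, Set.indicator_of_notMem (by
          simpa [Set.mem_setOf_eq, Set.mem_Ioc] using h)]
    rw [hfun, integral_indicator measurableSet_Ioc]
  rw [heq] at hFsm
  have hFae : AEStronglyMeasurable (fun s => (∫ u in Ioc s t, Real.exp (l * u) *
      |(if 0 < u - s then (u - s) ^ α else 0) - (if 0 < -s then (-s) ^ α else 0)|) ^ 2)
      (volume.restrict (Iio t)) := by
    have h2 := (hFsm.mul hFsm).aestronglyMeasurable (μ := volume.restrict (Iio t))
    exact h2.congr (Eventually.of_forall fun s => (pow_two _).symm)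
  refine ⟨part1, ?_⟩
  refine Integrable.mono' hGint hFae ?_
  rw [ae_restrict_iff' measurableSet_Iio]
  refine Eventually.of_forall fun s hs => ?_
  simp only [Set.mem_Iio] at hs
  have hF0 : 0 ≤ ∫ u in Ioc s t, Real.exp (l * u) *
      |(if 0 < u - s then (u - s) ^ α else 0) - (if 0 < -s then (-s) ^ α else 0)| :=
    setIntegral_nonneg measurableSet_Ioc fun u _ => by positivity
  rw [Real.norm_eq_abs, abs_of_nonneg (sq_nonneg _)]
  by_cases hsS : s ≤ S0
  · have hct := claim_tail s hsS
    simp only [hGdef]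
    rw [if_pos hsS]
    have hA' : (0:ℝ) ≤ 192 / l ^ 2 * Real.exp (l * s / 4) := by positivity
    have hB' : (0:ℝ) ≤ K2 * (-s / 2) ^ (α - 1) :=
      mul_nonneg hK2nn (Real.rpow_nonneg (by nlinarith [hS0b]) _)
    nlinarith [mul_self_le_mul_self hF0 hct,
      sq_nonneg (192 / l ^ 2 * Real.exp (l * s / 4) - K2 * (-s / 2) ^ (α - 1)), hA', hB']
  · push_neg at hsS
    have hce := claim_easy s hsS.le hs
    simp only [hGdef]
    rw [if_neg (not_le.2 hsS)]
    have hcsq : (if 0 < -s then ((-s) ^ α) ^ 2 else 0)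
        = (if 0 < -s then (-s) ^ α else 0) ^ 2 := by
      split_ifs with h
      · rfl
      · simp
    rw [hcsq]
    have hc := hcnn s
    nlinarith [mul_self_le_mul_self hF0 hce,
      sq_nonneg (M1 - M2 * (if 0 < -s then (-s) ^ α else 0)), hM1nn, hM2nn,
      mul_nonneg hM2nn hc]
end

section
/- Let α ∈ (−1/2, 0) ∪ (0, 1/2), λ > 0 and s < t be real numbers. Then the function u ↦ (e^{λu} − e^{λs})(u−s)^{α−1} is absolutely integrable on (s,t), and α ∫_s^t (e^{λu} − e^{λs})(u−s)^{α−1} du = (e^{λt} − e^{λs})(t−s)^α − λ ∫_s^t e^{λu} (u−s)^α du. -/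
open MeasureTheory Set Filter

lemma aux_rpow_int (β s t : ℝ) (hβ : -1 < β) (hst : s ≤ t) :
    MeasureTheory.IntegrableOn (fun u => (u - s) ^ β) (Set.Ioo s t) := by
  have h := (intervalIntegral.intervalIntegrable_rpow' (a := 0) (b := t - s) hβ).comp_sub_right s
  simp only [zero_add, sub_add_cancel] at h
  exact (intervalIntegrable_iff_integrableOn_Ioo_of_le hst).mp h

lemma mul_rpow_self (x β : ℝ) (hx : 0 < x) : x * x ^ β = x ^ (β + 1) := by
  have h := Real.rpow_add hx β 1
  rw [Real.rpow_one] at h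
  rw [h]; ring

lemma exp_sub_le (a b : ℝ) (hab : b ≤ a) : Real.exp a - Real.exp b ≤ Real.exp a * (a - b) := by
  have h := Real.add_one_le_exp (b - a)
  have h2 : Real.exp (b - a) * Real.exp a = Real.exp b := by
    rw [← Real.exp_add]; ring_nf
  nlinarith [Real.exp_pos a, mul_le_mul_of_nonneg_right h (Real.exp_pos a).le]

/-- Let `α ∈ (−1/2,0) ∪ (0,1/2)`, `λ > 0` and `s < t`. Then
`u ↦ (e^{λu} − e^{λs})(u−s)^{α−1}` is absolutely integrable on `(s,t)`, and
`α ∫_s^t (e^{λu} − e^{λs})(u−s)^{α−1} du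
  = (e^{λt} − e^{λs})(t−s)^α − λ ∫_s^t e^{λu}(u−s)^α du`. -/
theorem stmt4 (α l s t : ℝ) (hα : α ∈ Set.Ioo (-(1/2) : ℝ) (1/2)) (hα0 : α ≠ 0)
    (hl : 0 < l) (hst : s < t) :
    MeasureTheory.IntegrableOn
      (fun u => (Real.exp (l * u) - Real.exp (l * s)) * (u - s) ^ (α - 1)) (Set.Ioo s t) ∧
    α * (∫ u in Set.Ioo s t, (Real.exp (l * u) - Real.exp (l * s)) * (u - s) ^ (α - 1))
      = (Real.exp (l * t) - Real.exp (l * s)) * (t - s) ^ α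
        - l * ∫ u in Set.Ioo s t, Real.exp (l * u) * (u - s) ^ α := by
  obtain ⟨hαl, hαr⟩ := hα
  have hα1 : (-1:ℝ) < α := by linarith
  have hbound : ∀ u, s < u → u ≤ t →
      Real.exp (l * u) - Real.exp (l * s) ≤ l * Real.exp (l * t) * (u - s) := by
    intro u hu1 hu2
    have h1 := exp_sub_le (l * u) (l * s) (by nlinarith)
    have h2 : Real.exp (l * u) ≤ Real.exp (l * t) := Real.exp_le_exp.mpr (by nlinarith)
    calc Real.exp (l * u) - Real.exp (l * s) ≤ Real.exp (l * u) * (l * u - l * s) := h1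
      _ ≤ Real.exp (l * t) * (l * u - l * s) := by
          apply mul_le_mul_of_nonneg_right h2; nlinarith
      _ = l * Real.exp (l * t) * (u - s) := by ring
  have hmeas : MeasurableSet (Set.Ioo s t) := measurableSet_Ioo
  have hg : MeasureTheory.IntegrableOn (fun u => l * Real.exp (l * t) * (u - s) ^ α)
      (Set.Ioo s t) := (aux_rpow_int α s t hα1 hst.le).const_mul _
  have hf1 : MeasureTheory.IntegrableOn
      (fun u => (Real.exp (l * u) - Real.exp (l * s)) * (u - s) ^ (α - 1)) (Set.Ioo s t) := by
    apply MeasureTheory.Integrable.mono' hg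
    · apply ContinuousOn.aestronglyMeasurable _ hmeas
      apply ContinuousOn.mul
      · exact ((Real.continuous_exp.comp (continuous_const.mul continuous_id)).sub
          continuous_const).continuousOn
      · intro u hu
        exact ((continuousAt_id.sub continuousAt_const).rpow_const
          (Or.inl (sub_pos.mpr hu.1).ne')).continuousWithinAt
    · filter_upwards [MeasureTheory.ae_restrict_mem hmeas] with u hu
      have hus : 0 < u - s := sub_pos.mpr hu.1
      have hE : 0 ≤ Real.exp (l * u) - Real.exp (l * s) := by
        have : Real.exp (l * s) ≤ Real.exp (l * u) :=
          Real.exp_le_exp.mpr (by nlinarith [hu.1])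
        linarith
      rw [Real.norm_eq_abs, abs_mul, abs_of_nonneg hE,
        abs_of_nonneg (Real.rpow_nonneg hus.le _)]
      calc (Real.exp (l * u) - Real.exp (l * s)) * (u - s) ^ (α - 1)
          ≤ l * Real.exp (l * t) * (u - s) * (u - s) ^ (α - 1) :=
            mul_le_mul_of_nonneg_right (hbound u hu.1 hu.2.le) (Real.rpow_nonneg hus.le _)
        _ = l * Real.exp (l * t) * (u - s) ^ α := by
            rw [mul_assoc (l * Real.exp (l * t))]
            congr 1
            rw [mul_rpow_self _ _ hus, show α - 1 + 1 = α by ring]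
  have hf2 : MeasureTheory.IntegrableOn
      (fun u => Real.exp (l * u) * (u - s) ^ α) (Set.Ioo s t) := by
    apply MeasureTheory.Integrable.mono'
      ((aux_rpow_int α s t hα1 hst.le).const_mul (Real.exp (l * t)))
    · apply ContinuousOn.aestronglyMeasurable _ hmeas
      apply ContinuousOn.mul
      · exact (Real.continuous_exp.comp (continuous_const.mul continuous_id)).continuousOn
      · intro u hu
        exact ((continuousAt_id.sub continuousAt_const).rpow_const
          (Or.inl (sub_pos.mpr hu.1).ne')).continuousWithinAt
    · filter_upwards [MeasureTheory.ae_restrict_mem hmeas] with u hu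
      have hus : 0 < u - s := sub_pos.mpr hu.1
      rw [Real.norm_eq_abs, abs_mul, abs_of_pos (Real.exp_pos _),
        abs_of_nonneg (Real.rpow_nonneg hus.le _)]
      exact mul_le_mul_of_nonneg_right (Real.exp_le_exp.mpr (by nlinarith [hu.2]))
        (Real.rpow_nonneg hus.le _)
  refine ⟨hf1, ?_⟩
  set F : ℝ → ℝ := fun u => (Real.exp (l * u) - Real.exp (l * s)) * (u - s) ^ α with hF
  set F' : ℝ → ℝ := fun u => l * Real.exp (l * u) * (u - s) ^ α
    + (Real.exp (l * u) - Real.exp (l * s)) * (α * (u - s) ^ (α - 1)) with hF'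
  have hderiv : ∀ u ∈ Set.Ioo s t, HasDerivAt F (F' u) u := by
    intro u hu
    have hus : u - s ≠ 0 := (sub_pos.mpr hu.1).ne'
    have h1 : HasDerivAt (fun u => Real.exp (l * u) - Real.exp (l * s))
        (l * Real.exp (l * u)) u := by
      have := (Real.hasDerivAt_exp (l * u)).comp u ((hasDerivAt_id u).const_mul l)
      simpa [mul_comm] using this.sub_const (Real.exp (l * s))
    have h2 : HasDerivAt (fun u : ℝ => (u - s) ^ α) (α * (u - s) ^ (α - 1)) u := by
      have := ((hasDerivAt_id u).sub_const s).rpow_const (p := α) (Or.inl hus)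
      simpa using this
    exact h1.mul h2
  have hne : α + 1 ≠ 0 := by intro h; linarith
  have hcont : ContinuousOn F (Set.Icc s t) := by
    intro x hx
    rcases eq_or_ne x s with rfl | hxs
    · have hFs : F x = 0 := by simp [hF]
      rw [ContinuousWithinAt, hFs]
      have hc : ContinuousWithinAt (fun u => l * Real.exp (l * t) * (u - x) ^ (α + 1))
          (Set.Icc x t) x :=
        (continuousAt_const.mul ((continuousAt_id.sub continuousAt_const).rpow_const
          (Or.inr (by linarith)))).continuousWithinAt
      have htend : Tendsto (fun u => l * Real.exp (l * t) * (u - x) ^ (α + 1))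
          (nhdsWithin x (Set.Icc x t)) (nhds 0) := by
        have h1 : Tendsto (fun u => l * Real.exp (l * t) * (u - x) ^ (α + 1))
            (nhdsWithin x (Set.Icc x t))
            (nhds (l * Real.exp (l * t) * (x - x) ^ (α + 1))) := hc
        simpa [Real.zero_rpow hne] using h1
      apply squeeze_zero_norm' _ htend
      filter_upwards [self_mem_nhdsWithin] with u hu
      rcases eq_or_lt_of_le hu.1 with rfl | hus
      · simp [hF, Real.zero_rpow hne]
      · have hus' : 0 < u - x := sub_pos.mpr hus
        have hE : 0 ≤ Real.exp (l * u) - Real.exp (l * x) := by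
          have : Real.exp (l * x) ≤ Real.exp (l * u) := Real.exp_le_exp.mpr (by nlinarith)
          linarith
        rw [Real.norm_eq_abs, hF, abs_mul, abs_of_nonneg hE,
          abs_of_nonneg (Real.rpow_nonneg hus'.le _)]
        calc (Real.exp (l * u) - Real.exp (l * x)) * (u - x) ^ α
            ≤ l * Real.exp (l * t) * (u - x) * (u - x) ^ α :=
              mul_le_mul_of_nonneg_right (hbound u hus hu.2) (Real.rpow_nonneg hus'.le _)
          _ = l * Real.exp (l * t) * (u - x) ^ (α + 1) := by
              rw [mul_assoc (l * Real.exp (l * t))]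
              congr 1
              rw [mul_rpow_self _ _ hus']
    · have hxs' : x - s ≠ 0 := by
        intro h; exact hxs (by linarith [sub_eq_zero.mp h])
      apply ContinuousAt.continuousWithinAt
      exact (((Real.continuous_exp.comp (continuous_const.mul continuous_id)).sub
        continuous_const).continuousAt).mul
        ((continuousAt_id.sub continuousAt_const).rpow_const (Or.inl hxs'))
  have hi1 : IntervalIntegrable (fun u => l * Real.exp (l * u) * (u - s) ^ α) volume s t := by
    rw [intervalIntegrable_iff_integrableOn_Ioo_of_le hst.le]
    simpa [mul_assoc, IntegrableOn] using hf2.const_mul l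
  have hi2 : IntervalIntegrable
      (fun u => (Real.exp (l * u) - Real.exp (l * s)) * (α * (u - s) ^ (α - 1))) volume s t := by
    rw [intervalIntegrable_iff_integrableOn_Ioo_of_le hst.le]
    exact (hf1.const_mul α).congr (Filter.Eventually.of_forall fun u => by ring)
  have hint : IntervalIntegrable F' volume s t := hi1.add hi2
  have hftc := intervalIntegral.integral_eq_sub_of_hasDerivAt_of_le hst.le hcont hderiv hint
  have hFt : F t - F s = (Real.exp (l * t) - Real.exp (l * s)) * (t - s) ^ α := by
    simp [hF]
  rw [hFt] at hftc
  rw [hF', intervalIntegral.integral_add hi1 hi2] at hftc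
  have e1 : (∫ u in s..t, l * Real.exp (l * u) * (u - s) ^ α)
      = l * ∫ u in Set.Ioo s t, Real.exp (l * u) * (u - s) ^ α := by
    rw [intervalIntegral.integral_of_le hst.le, MeasureTheory.integral_Ioc_eq_integral_Ioo,
      ← MeasureTheory.integral_const_mul]
    congr 1; ext u; ring
  have e2 : (∫ u in s..t, (Real.exp (l * u) - Real.exp (l * s)) * (α * (u - s) ^ (α - 1)))
      = α * ∫ u in Set.Ioo s t, (Real.exp (l * u) - Real.exp (l * s)) * (u - s) ^ (α - 1) := by
    rw [intervalIntegral.integral_of_le hst.le, MeasureTheory.integral_Ioc_eq_integral_Ioo,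
      ← MeasureTheory.integral_const_mul]
    congr 1; ext u; ring
  rw [e1, e2] at hftc
  linarith
end

section
/- Let s < t be real numbers, let f : ℝ → ℝ be continuous and monotone nondecreasing with associated Lebesgue–Stieltjes measure μ_f, and let g : (s,t] → ℝ be continuously differentiable. Assume: (i) lim_{u↓s} (f(u) − f(s)) g(u) = 0; (ii) u ↦ (f(u) − f(s)) g'(u) is Lebesgue-integrable on (s,t); (iii) g is μ_f-integrable on (s,t]. Then ∫_s^t (f(u) − f(s)) g'(u) du = (f(t) − f(s)) g(t) − ∫_{(s,t]} g(r) dμ_f(r). -/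
open MeasureTheory Set Filter

/-- Let `s < t`, let `f` be a continuous nondecreasing function (a continuous
Stieltjes function) with Lebesgue–Stieltjes measure `f.measure`, and let `g` be
continuously differentiable on `(s,t]` with derivative `g'`. Assume:
(i) `(f(u) − f(s)) g(u) → 0` as `u ↓ s`;
(ii) `u ↦ (f(u) − f(s)) g'(u)` is integrable on `(s,t)`;
(iii) `g` is `f.measure`-integrable on `(s,t]`. Then
`∫_s^t (f(u) − f(s)) g'(u) du = (f(t) − f(s)) g(t) − ∫_{(s,t]} g dμ_f`. -/
theorem stmt5 (s t : ℝ) (hst : s < t) (f : StieltjesFunction ℝ) (hf : Continuous f)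
    (g g' : ℝ → ℝ)
    (hg : ∀ u ∈ Set.Ioc s t, HasDerivWithinAt g (g' u) (Set.Ioc s t) u)
    (hg' : ContinuousOn g' (Set.Ioc s t))
    (h1 : Filter.Tendsto (fun u => (f u - f s) * g u) (nhdsWithin s (Set.Ioi s)) (nhds 0))
    (h2 : MeasureTheory.IntegrableOn (fun u => (f u - f s) * g' u) (Set.Ioo s t))
    (h3 : MeasureTheory.IntegrableOn g (Set.Ioc s t) f.measure) :
    (∫ u in Set.Ioo s t, (f u - f s) * g' u)
      = (f t - f s) * g t - ∫ r in Set.Ioc s t, g r ∂f.measure := by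
  have hgc : ContinuousOn g (Set.Ioc s t) := fun u hu => (hg u hu).continuousWithinAt
  -- Fundamental theorem of calculus on `[r, t]`
  have ftc : ∀ r ∈ Set.Ioc s t, ∫ u in Set.Ioo r t, g' u = g t - g r := by
    intro r hr
    rcases eq_or_lt_of_le hr.2 with h | h
    · subst h; simp
    · have hsub : Set.Icc r t ⊆ Set.Ioc s t := fun x hx => ⟨hr.1.trans_le hx.1, hx.2⟩
      have key := intervalIntegral.integral_eq_sub_of_hasDeriv_right_of_le h.le
        (hgc.mono hsub)
        (fun x hx => by
          refine (hg x (hsub (Set.Ioo_subset_Icc_self hx))).mono_of_mem_nhdsWithin ?_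
          have hmem : Set.Ioo s t ∈ nhds x :=
            isOpen_Ioo.mem_nhds ⟨hr.1.trans hx.1, hx.2⟩
          refine Filter.mem_of_superset (inter_mem_nhdsWithin (Set.Ioi x) hmem) ?_
          exact fun y hy => ⟨hy.2.1, hy.2.2.le⟩)
        ((hg'.mono hsub).intervalIntegrable_of_Icc h.le)
      rwa [intervalIntegral.integral_of_le h.le,
        MeasureTheory.integral_Ioc_eq_integral_Ioo] at key
  -- Core integration by parts identity for `a ∈ (s, t)`
  have core : ∀ a ∈ Set.Ioo s t, ∫ u in Set.Ioo a t, (f u - f a) * g' u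
      = (f t - f a) * g t - ∫ r in Set.Ioc a t, g r ∂f.measure := by
    intro a ha
    obtain ⟨hsa, hat⟩ := ha
    have hIcc : Set.Icc a t ⊆ Set.Ioc s t := fun x hx => ⟨hsa.trans_le hx.1, hx.2⟩
    -- continuous bounded extension of `g'`
    set G : ℝ → ℝ := fun u => g' (max a (min u t)) with hG
    have hmaps : ∀ u, max a (min u t) ∈ Set.Icc a t :=
      fun u => ⟨le_max_left _ _, max_le hat.le (min_le_right _ _)⟩
    have hGcont : Continuous G :=
      (hg'.mono hIcc).comp_continuous
        (continuous_const.max (continuous_id.min continuous_const)) hmaps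
    have hGeq : ∀ u ∈ Set.Icc a t, G u = g' u := by
      intro u hu; simp [hG, min_eq_left hu.2, max_eq_right hu.1]
    obtain ⟨C, hC⟩ := isCompact_Icc.exists_bound_of_continuousOn (hg'.mono hIcc)
    have hGbd : ∀ u, ‖G u‖ ≤ C := fun u => hC _ (hmaps u)
    set μ' := f.measure.restrict (Set.Ioc a t) with hμ'
    set lam := volume.restrict (Set.Ioo a t) with hlam
    haveI : IsFiniteMeasure μ' :=
      ⟨by rw [hμ', Measure.restrict_apply_univ, f.measure_Ioc]; exact ENNReal.ofReal_lt_top⟩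
    haveI : IsFiniteMeasure lam :=
      ⟨by rw [hlam, Measure.restrict_apply_univ, Real.volume_Ioo]; exact ENNReal.ofReal_lt_top⟩
    set Φ : ℝ × ℝ → ℝ := fun p => Set.indicator {q : ℝ × ℝ | q.1 < q.2} (fun q => G q.2) p
      with hΦ
    have hS : MeasurableSet {q : ℝ × ℝ | q.1 < q.2} :=
      (isOpen_lt continuous_fst continuous_snd).measurableSet
    have hΦmeas : Measurable Φ := ((hGcont.comp continuous_snd).measurable).indicator hS
    have hΦint : Integrable (Function.uncurry fun r u => Φ (r, u)) (μ'.prod lam) := by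
      refine Integrable.mono' (integrable_const C) hΦmeas.aestronglyMeasurable ?_
      refine Filter.Eventually.of_forall fun p => ?_
      calc ‖Φ p‖ ≤ ‖G p.2‖ := norm_indicator_le_norm_self _ _
        _ ≤ C := hGbd _
    have swap := MeasureTheory.integral_integral_swap hΦint
    -- left side of `swap`
    have hL : (∫ r, (∫ u, Φ (r, u) ∂lam) ∂μ')
        = ∫ r in Set.Ioc a t, (g t - g r) ∂f.measure := by
      rw [hμ']
      refine MeasureTheory.setIntegral_congr_fun measurableSet_Ioc fun r hr => ?_
      have h1' : (fun u => Φ (r, u)) = Set.indicator (Set.Ioi r) G := by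
        funext u
        by_cases h : r < u <;>
          simp [hΦ, Set.indicator, h, Set.mem_Ioi, Set.mem_setOf_eq]
      rw [h1', MeasureTheory.integral_indicator measurableSet_Ioi, hlam,
        Measure.restrict_restrict measurableSet_Ioi]
      have h2' : Set.Ioi r ∩ Set.Ioo a t = Set.Ioo r t := by
        ext x
        simp only [Set.mem_inter_iff, Set.mem_Ioi, Set.mem_Ioo]
        constructor
        · rintro ⟨hx1, _, hx3⟩; exact ⟨hx1, hx3⟩
        · rintro ⟨hx1, hx2⟩; exact ⟨hx1, hr.1.trans hx1, hx2⟩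
      have h3' : ∫ u in Set.Ioo r t, G u = ∫ u in Set.Ioo r t, g' u :=
        MeasureTheory.setIntegral_congr_fun measurableSet_Ioo fun u hu =>
          hGeq u ⟨hr.1.le.trans hu.1.le, hu.2.le⟩
      rw [h2', h3', ftc r ⟨hsa.trans hr.1, hr.2⟩]
    -- right side of `swap`
    have hR : (∫ u, (∫ r, Φ (r, u) ∂μ') ∂lam)
        = ∫ u in Set.Ioo a t, (f u - f a) * g' u := by
      rw [hlam]
      refine MeasureTheory.setIntegral_congr_fun measurableSet_Ioo fun u hu => ?_
      have h1' : (fun r => Φ (r, u)) = Set.indicator (Set.Iio u) (fun _ => G u) := by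
        funext r
        by_cases h : r < u <;>
          simp [hΦ, Set.indicator, h, Set.mem_Iio, Set.mem_setOf_eq]
      rw [h1', MeasureTheory.integral_indicator_const _ measurableSet_Iio]
      have h2' : μ' (Set.Iio u) = ENNReal.ofReal (f u - f a) := by
        rw [hμ', Measure.restrict_apply measurableSet_Iio]
        have heq : Set.Iio u ∩ Set.Ioc a t = Set.Ioo a u := by
          ext x
          simp only [Set.mem_inter_iff, Set.mem_Iio, Set.mem_Ioc, Set.mem_Ioo]
          constructor
          · rintro ⟨hx1, hx2, _⟩; exact ⟨hx2, hx1⟩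
          · rintro ⟨hx1, hx2⟩; exact ⟨hx2, hx1, (hx2.trans hu.2).le⟩
        rw [heq, f.measure_Ioo]
        congr 1
        have hll : Function.leftLim (⇑f) u = f u :=
          leftLim_eq_of_tendsto
            (hf.continuousAt.tendsto.mono_left nhdsWithin_le_nhds)
        rw [hll]
      rw [measureReal_def, h2', ENNReal.toReal_ofReal (by linarith [f.mono hu.1.le]), smul_eq_mul,
        hGeq u ⟨hu.1.le, hu.2.le⟩]
    -- combine
    have hfin : ∫ r in Set.Ioc a t, (g t - g r) ∂f.measure
        = (f t - f a) * g t - ∫ r in Set.Ioc a t, g r ∂f.measure := by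
      rw [MeasureTheory.integral_sub (integrable_const _)
        (h3.mono_set (Set.Ioc_subset_Ioc_left hsa.le))]
      congr 1
      rw [MeasureTheory.setIntegral_const, measureReal_def, f.measure_Ioc,
        ENNReal.toReal_ofReal (by linarith [f.mono hat.le]), smul_eq_mul]
    calc ∫ u in Set.Ioo a t, (f u - f a) * g' u
        = ∫ u, (∫ r, Φ (r, u) ∂μ') ∂lam := hR.symm
      _ = ∫ r, (∫ u, Φ (r, u) ∂lam) ∂μ' := swap.symm
      _ = ∫ r in Set.Ioc a t, (g t - g r) ∂f.measure := hL
      _ = (f t - f a) * g t - ∫ r in Set.Ioc a t, g r ∂f.measure := hfin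
  -- approximating sequence
  set a : ℕ → ℝ := fun n => s + (t - s) / (n + 2) with ha_def
  have ha_mem : ∀ n, a n ∈ Set.Ioo s t := by
    intro n
    have hpos : (0:ℝ) < (n:ℝ) + 2 := by positivity
    constructor
    · have : (0:ℝ) < (t - s) / ((n:ℝ) + 2) := div_pos (by linarith) hpos
      simp only [ha_def]; linarith
    · have hlt : (t - s) / ((n:ℝ) + 2) < t - s := by
        apply div_lt_self (by linarith)
        have : (0:ℝ) ≤ (n:ℝ) := Nat.cast_nonneg n
        linarith
      simp only [ha_def]; linarith
  have ha_anti : Antitone a := by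
    intro m n hmn
    simp only [ha_def]
    have h1' : (0:ℝ) < (m:ℝ) + 2 := by positivity
    have h2' : (m:ℝ) + 2 ≤ (n:ℝ) + 2 := by
      have : (m:ℝ) ≤ (n:ℝ) := Nat.cast_le.mpr hmn
      linarith
    gcongr
  have ha_lim : Tendsto a atTop (nhds s) := by
    have h0 : Tendsto (fun n : ℕ => (t - s) / ((n:ℝ) + 2)) atTop (nhds 0) := by
      apply Tendsto.div_atTop tendsto_const_nhds
      exact tendsto_atTop_add_const_right atTop 2 tendsto_natCast_atTop_atTop
    have := tendsto_const_nhds.add h0 (f := fun _ : ℕ => s) (x := atTop)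
    simpa using this
  have ha_lim' : Tendsto a atTop (nhdsWithin s (Set.Ioi s)) :=
    tendsto_nhdsWithin_of_tendsto_nhds_of_eventually_within _ ha_lim
      (Eventually.of_forall fun n => (ha_mem n).1)
  -- equality along the sequence
  have hEq : ∀ n, ∫ u in Set.Ioo (a n) t, (f u - f s) * g' u
      = (f t - f s) * g t - (f (a n) - f s) * g (a n)
        - ∫ r in Set.Ioc (a n) t, g r ∂f.measure := by
    intro n
    obtain ⟨h1a, h2a⟩ := ha_mem n
    have hIcc : Set.Icc (a n) t ⊆ Set.Ioc s t := fun x hx => ⟨h1a.trans_le hx.1, hx.2⟩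
    have hint1 : IntegrableOn (fun u => (f u - f (a n)) * g' u) (Set.Ioo (a n) t) :=
      ((((hf.continuousOn).sub continuousOn_const).mul
        (hg'.mono hIcc)).integrableOn_compact isCompact_Icc).mono_set
          Set.Ioo_subset_Icc_self
    have hint2 : IntegrableOn g' (Set.Ioo (a n) t) :=
      ((hg'.mono hIcc).integrableOn_compact isCompact_Icc).mono_set
        Set.Ioo_subset_Icc_self
    calc ∫ u in Set.Ioo (a n) t, (f u - f s) * g' u
        = ∫ u in Set.Ioo (a n) t,
            ((f u - f (a n)) * g' u + (f (a n) - f s) * g' u) := by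
          refine MeasureTheory.setIntegral_congr_fun measurableSet_Ioo fun u _ => ?_
          ring
      _ = (∫ u in Set.Ioo (a n) t, (f u - f (a n)) * g' u)
            + (f (a n) - f s) * ∫ u in Set.Ioo (a n) t, g' u := by
          rw [MeasureTheory.integral_add hint1 (hint2.const_mul _),
            MeasureTheory.integral_const_mul]
      _ = ((f t - f (a n)) * g t - ∫ r in Set.Ioc (a n) t, g r ∂f.measure)
            + (f (a n) - f s) * (g t - g (a n)) := by
          rw [core (a n) (ha_mem n), ftc (a n) ⟨h1a, h2a.le⟩]
      _ = (f t - f s) * g t - (f (a n) - f s) * g (a n)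
            - ∫ r in Set.Ioc (a n) t, g r ∂f.measure := by ring
  -- limits
  have hUo : ⋃ n, Set.Ioo (a n) t = Set.Ioo s t := by
    apply Set.Subset.antisymm
    · exact Set.iUnion_subset fun n => Set.Ioo_subset_Ioo_left (ha_mem n).1.le
    · intro x hx
      obtain ⟨n, hn⟩ := (ha_lim.eventually_lt_const hx.1).exists
      exact Set.mem_iUnion.2 ⟨n, hn, hx.2⟩
  have hUc : ⋃ n, Set.Ioc (a n) t = Set.Ioc s t := by
    apply Set.Subset.antisymm
    · exact Set.iUnion_subset fun n => Set.Ioc_subset_Ioc_left (ha_mem n).1.le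
    · intro x hx
      obtain ⟨n, hn⟩ := (ha_lim.eventually_lt_const hx.1).exists
      exact Set.mem_iUnion.2 ⟨n, hn, hx.2⟩
  have limL : Tendsto (fun n => ∫ u in Set.Ioo (a n) t, (f u - f s) * g' u) atTop
      (nhds (∫ u in Set.Ioo s t, (f u - f s) * g' u)) := by
    have := MeasureTheory.tendsto_setIntegral_of_monotone
      (fun n : ℕ => measurableSet_Ioo)
      (fun m n hmn => Set.Ioo_subset_Ioo_left (ha_anti hmn))
      (by rw [hUo]; exact h2)
    rwa [hUo] at this
  have limM : Tendsto (fun n => ∫ r in Set.Ioc (a n) t, g r ∂f.measure) atTop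
      (nhds (∫ r in Set.Ioc s t, g r ∂f.measure)) := by
    have := MeasureTheory.tendsto_setIntegral_of_monotone
      (fun n : ℕ => measurableSet_Ioc)
      (fun m n hmn => Set.Ioc_subset_Ioc_left (ha_anti hmn))
      (by rw [hUc]; exact h3)
    rwa [hUc] at this
  have limb : Tendsto (fun n => (f (a n) - f s) * g (a n)) atTop (nhds 0) :=
    h1.comp ha_lim'
  have limR : Tendsto (fun n => (f t - f s) * g t - (f (a n) - f s) * g (a n)
      - ∫ r in Set.Ioc (a n) t, g r ∂f.measure) atTop
      (nhds ((f t - f s) * g t - 0 - ∫ r in Set.Ioc s t, g r ∂f.measure)) :=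
    (tendsto_const_nhds.sub limb).sub limM
  have := tendsto_nhds_unique (limL.congr hEq) limR
  rw [this]; ring
end

section
/- Fix t ∈ ℝ and α ∈ (−1/2, 0) ∪ (0, 1/2). Let f : (−∞, t] → ℝ be continuous, and for s < t set ℓ_t(s) := ∫_s^t ((r−s)_+^α − (−s)_+^α) f(r) dr (the integral converges absolutely for every s < t). If there exist constants ζ > α + 3/2, M > 0 and x₀ < min(t,0) such that |f(u)| ≤ M |u|^{−ζ} for all u ≤ x₀, then ∫_{−∞}^t ℓ_t(s)² ds < ∞. -/
open MeasureTheory Set Filter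

lemma abs_rpow_sub_rpow_le {α m a b : ℝ} (hα : α ≤ 1) (hm : 0 < m) (hma : m ≤ a) (hmb : m ≤ b) :
    |a ^ α - b ^ α| ≤ |α| * m ^ (α - 1) * |a - b| := by
  have key := Convex.norm_image_sub_le_of_norm_hasDerivWithin_le
    (f := fun x : ℝ => x ^ α) (f' := fun x => α * x ^ (α - 1)) (s := Ici m)
    (C := |α| * m ^ (α - 1)) ?_ ?_ (convex_Ici m) hmb hma
  · simpa [Real.norm_eq_abs] using key
  · intro x hx
    exact (Real.hasDerivAt_rpow_const (Or.inl (ne_of_gt (lt_of_lt_of_le hm hx)))).hasDerivWithinAt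
  · intro x hx
    rw [Real.norm_eq_abs, abs_mul, abs_of_nonneg (Real.rpow_nonneg (le_trans hm.le hx) _)]
    exact mul_le_mul_of_nonneg_left
      (Real.rpow_le_rpow_of_nonpos hm hx (by linarith)) (abs_nonneg α)

lemma measurable_posrpow (α : ℝ) : Measurable (fun x : ℝ => if 0 < x then x ^ α else 0) := by
  have h : (fun x : ℝ => if 0 < x then x ^ α else 0)
      = fun x => if 0 < x then Real.exp (Real.log x * α) else 0 := by
    funext x; split
    · rw [Real.rpow_def_of_pos ‹0 < x›]
    · rfl
  rw [h]
  exact Measurable.ite measurableSet_Ioi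
    ((Real.measurable_log.mul measurable_const).exp) measurable_const

lemma part1 {t α : ℝ} (hα1 : (-1:ℝ) < α) {f : ℝ → ℝ} (hf : ContinuousOn f (Set.Iic t))
    {s : ℝ} (hs : s < t) :
    IntegrableOn (fun r => ((if 0 < r - s then (r - s) ^ α else 0)
      - (if 0 < -s then (-s) ^ α else 0)) * f r) (Ioc s t) := by
  set c : ℝ := if 0 < -s then (-s) ^ α else 0 with hc_def
  have hc : 0 ≤ c := by
    rw [hc_def]; split
    · exact Real.rpow_nonneg (by linarith [‹0 < -s›]) _
    · exact le_rfl
  obtain ⟨B, hB⟩ := (isCompact_Icc (a := s) (b := t)).exists_bound_of_continuousOn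
    (hf.mono (Icc_subset_Iic_self))
  have hB0 : 0 ≤ B := le_trans (norm_nonneg _) (hB s (left_mem_Icc.2 hs.le))
  have hpow : IntegrableOn (fun r => (r - s) ^ α) (Ioc s t) := by
    have h1 : IntervalIntegrable (fun x : ℝ => x ^ α) volume 0 (t - s) :=
      intervalIntegral.intervalIntegrable_rpow' hα1
    have h2 := h1.comp_sub_right s
    rw [zero_add, sub_add_cancel] at h2
    exact (intervalIntegrable_iff_integrableOn_Ioc_of_le hs.le).1 h2
  have hdom : IntegrableOn (fun r => ((r - s) ^ α + c) * B) (Ioc s t) :=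
    (hpow.add (integrableOn_const measure_Ioc_lt_top.ne)).mul_const B
  have hK : Measurable fun r : ℝ => ((if 0 < r - s then (r - s) ^ α else 0) - c) :=
    ((measurable_posrpow α).comp (measurable_id.sub measurable_const)).sub measurable_const
  have hfm : AEStronglyMeasurable f (volume.restrict (Ioc s t)) :=
    (hf.mono (Ioc_subset_Iic_self)).aestronglyMeasurable measurableSet_Ioc
  refine Integrable.mono' hdom (hK.aestronglyMeasurable.mul hfm) ?_
  rw [ae_restrict_iff' measurableSet_Ioc]
  refine ae_of_all _ fun r hr => ?_
  have hrs : 0 < r - s := sub_pos.2 hr.1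
  rw [norm_mul, Real.norm_eq_abs, Real.norm_eq_abs, if_pos hrs]
  have h1 : |(r - s) ^ α - c| ≤ (r - s) ^ α + c := by
    refine (abs_sub _ _).trans ?_
    rw [abs_of_nonneg (Real.rpow_nonneg hrs.le _), abs_of_nonneg hc]
  have h2 : |f r| ≤ B := by
    simpa using hB r (Icc_subset_Icc_left (le_refl s) ⟨hr.1.le, hr.2⟩)
  exact mul_le_mul h1 h2 (abs_nonneg _) (by positivity)

lemma sq_rpow {x : ℝ} (p : ℝ) (hx : 0 ≤ x) : (x ^ p) ^ 2 = x ^ (2 * p) := by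
  rw [mul_comm, ← Real.rpow_natCast (x ^ p) 2, ← Real.rpow_mul hx]
  norm_num

lemma rpow_half_le {y q : ℝ} (hy : 0 < y) (hq : -2 ≤ q) : (y / 2) ^ q ≤ 4 * y ^ q := by
  have h1 : (y / 2) = y * (2:ℝ)⁻¹ := by ring
  rw [h1, Real.mul_rpow hy.le (by norm_num), Real.inv_rpow (by norm_num : (0:ℝ) ≤ 2),
    ← Real.rpow_neg (by norm_num : (0:ℝ) ≤ 2)]
  have h2 : (2:ℝ) ^ (-q) ≤ (2:ℝ) ^ (2:ℝ) :=
    Real.rpow_le_rpow_of_exponent_le one_le_two (by linarith)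
  have h3 : (2:ℝ) ^ (2:ℝ) = 4 := by
    rw [show (2:ℝ) = ((2:ℕ):ℝ) from by norm_num, Real.rpow_natCast]; norm_num
  rw [mul_comm]
  exact mul_le_mul_of_nonneg_right (h3 ▸ h2) (Real.rpow_nonneg hy.le _)

lemma int_comp₁ {s m α : ℝ} (hα : -1 < α) (hα0 : α + 1 ≠ 0) (hsm : s ≤ m) :
    ∫ r in Ioc s m, (r - s) ^ α = (m - s) ^ (α + 1) / (α + 1) := by
  rw [← intervalIntegral.integral_of_le hsm,
    intervalIntegral.integral_comp_sub_right (fun x => x ^ α) s, sub_self,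
    integral_rpow (Or.inl hα), Real.zero_rpow hα0]
  ring

lemma int_comp₂ {a b q : ℝ} (hq : -1 < q) (hab : a ≤ b) :
    ∫ r in Ioc a b, (-r) ^ q = ((-a) ^ (q + 1) - (-b) ^ (q + 1)) / (q + 1) := by
  rw [← intervalIntegral.integral_of_le hab,
    intervalIntegral.integral_comp_neg (fun x => x ^ q), integral_rpow (Or.inl hq)]

lemma keybound {t α z' M' x₀ B₂ : ℝ} (hα1 : -(1/2:ℝ) < α) (hα2 : α < 1/2)
    (hz1 : α + 3/2 < z') (hz2 : z' < 2)
    {f : ℝ → ℝ} (hf : ContinuousOn f (Iic t)) (hx₀t : x₀ < t) (hx₀0 : x₀ < 0)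
    (hM' : 0 ≤ M') (hbd' : ∀ u ≤ x₀, |f u| ≤ M' * |u| ^ (-z'))
    (hB₂ : ∀ r ∈ Icc x₀ t, |r| * |f r| ≤ B₂)
    {s : ℝ} (hs2 : s ≤ -2) (hs2x : s ≤ 2 * x₀) :
    |∫ r in Ioc s t, ((if 0 < r - s then (r - s) ^ α else 0)
        - (if 0 < -s then (-s) ^ α else 0)) * f r|
      ≤ (4 * (M' * (1/(α+1) + 2) + |α| * M' / (2 - z'))) * (-s) ^ (α+1-z')
        + (4 * (|α| * B₂ * (t - x₀))) * (-s) ^ (α-1) := by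
  have hα1' : (-1:ℝ) < α := by linarith
  have hm0 : 0 < -(s/2) := by linarith
  have hsm : s < s/2 := by linarith
  have hmx : s/2 ≤ x₀ := by linarith
  have hmt : s/2 < t := by linarith
  have hst : s < t := by linarith
  have hs0 : 0 < -s := by linarith
  have hB₂0 : 0 ≤ B₂ := le_trans (by positivity) (hB₂ x₀ ⟨le_rfl, hx₀t.le⟩)
  have hz'0 : 0 < z' := by linarith
  set g : ℝ → ℝ := fun r => ((if 0 < r - s then (r - s) ^ α else 0)
      - (if 0 < -s then (-s) ^ α else 0)) * f r with hg_def
  have hg1 : IntegrableOn (fun r => ‖g r‖) (Ioc s t) := (part1 hα1' hf hst).norm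
  have hg1a : IntegrableOn (fun r => ‖g r‖) (Ioc s (s/2)) :=
    hg1.mono_set (Ioc_subset_Ioc_right hmt.le)
  have hg1b : IntegrableOn (fun r => ‖g r‖) (Ioc (s/2) t) :=
    hg1.mono_set (Ioc_subset_Ioc_left hsm.le)
  have step1 : |∫ r in Ioc s t, g r| ≤ ∫ r in Ioc s t, ‖g r‖ := by
    rw [← Real.norm_eq_abs]
    exact norm_integral_le_integral_norm g
  have step2 : ∫ r in Ioc s t, ‖g r‖
      = (∫ r in Ioc s (s/2), ‖g r‖) + ∫ r in Ioc (s/2) t, ‖g r‖ := by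
    rw [← Set.Ioc_union_Ioc_eq_Ioc hsm.le hmt.le]
    exact setIntegral_union (Set.Ioc_disjoint_Ioc_of_le le_rfl) measurableSet_Ioc hg1a hg1b
  -- piece 1
  have hpow1 : IntegrableOn (fun r => (r - s) ^ α) (Ioc s (s/2)) := by
    have h1 : IntervalIntegrable (fun x : ℝ => x ^ α) volume 0 (s/2 - s) :=
      intervalIntegral.intervalIntegrable_rpow' hα1'
    have h2 := h1.comp_sub_right s
    rw [zero_add, sub_add_cancel] at h2
    exact (intervalIntegrable_iff_integrableOn_Ioc_of_le hsm.le).1 h2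
  have hψ₁int : IntegrableOn
      (fun r => ((r - s) ^ α + (-s) ^ α) * (M' * (-(s/2)) ^ (-z'))) (Ioc s (s/2)) :=
    (hpow1.add (integrableOn_const measure_Ioc_lt_top.ne)).mul_const _
  have h31 : (∫ r in Ioc s (s/2), ‖g r‖)
      ≤ ∫ r in Ioc s (s/2), ((r - s) ^ α + (-s) ^ α) * (M' * (-(s/2)) ^ (-z')) := by
    refine setIntegral_mono_on hg1a hψ₁int measurableSet_Ioc (fun r hr => ?_)
    have hrs : 0 < r - s := sub_pos.2 hr.1
    have hr0 : r ≤ x₀ := hr.2.trans hmx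
    rw [hg_def]
    simp only [norm_mul, Real.norm_eq_abs, if_pos hrs, if_pos hs0]
    have h1 : |(r - s) ^ α - (-s) ^ α| ≤ (r - s) ^ α + (-s) ^ α := by
      refine (abs_sub _ _).trans ?_
      rw [abs_of_nonneg (Real.rpow_nonneg hrs.le _), abs_of_nonneg (Real.rpow_nonneg hs0.le _)]
    have h2 : |f r| ≤ M' * (-(s/2)) ^ (-z') := by
      refine (hbd' r hr0).trans ?_
      have hrneg : r < 0 := lt_of_le_of_lt hr0 hx₀0
      have habs : -(s/2) ≤ |r| := by
        rw [abs_of_neg hrneg]; linarith [hr.2]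
      exact mul_le_mul_of_nonneg_left
        (Real.rpow_le_rpow_of_nonpos hm0 habs (by linarith)) hM'
    exact mul_le_mul h1 h2 (abs_nonneg _) (by positivity)
  have h32 : (∫ r in Ioc s (s/2), ((r - s) ^ α + (-s) ^ α) * (M' * (-(s/2)) ^ (-z')))
      = ((-(s/2)) ^ (α+1) / (α+1) + (-(s/2)) * (-s) ^ α) * (M' * (-(s/2)) ^ (-z')) := by
    rw [integral_mul_const]
    congr 1
    rw [integral_add hpow1 (integrableOn_const measure_Ioc_lt_top.ne),
      int_comp₁ hα1' (by linarith) hsm.le, setIntegral_const, Real.volume_real_Ioc_of_le (by linarith),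
      smul_eq_mul]
    congr 2 <;> ring
  have hyα : (-s) ^ α ≤ 2 * (-(s/2)) ^ α := by
    have h1 : (-s) = 2 * (-(s/2)) := by ring
    rw [h1, Real.mul_rpow (by norm_num) hm0.le]
    have h2 : (2:ℝ) ^ α ≤ 2 := by
      calc (2:ℝ) ^ α ≤ (2:ℝ) ^ (1:ℝ) :=
            Real.rpow_le_rpow_of_exponent_le one_le_two (by linarith)
        _ = 2 := Real.rpow_one 2
    exact mul_le_mul_of_nonneg_right h2 (Real.rpow_nonneg hm0.le _)
  have hsum1 : (-(s/2)) ^ (α+1) / (α+1) + (-(s/2)) * (-s) ^ α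
      ≤ (1/(α+1) + 2) * (-(s/2)) ^ (α+1) := by
    have h1 : (-(s/2)) ^ (α+1) = (-(s/2)) ^ α * (-(s/2)) :=
      Real.rpow_add_one (ne_of_gt hm0) α
    have h2 : (-(s/2)) * (-s) ^ α ≤ 2 * (-(s/2)) ^ (α+1) := by
      rw [h1]
      calc (-(s/2)) * (-s) ^ α ≤ (-(s/2)) * (2 * (-(s/2)) ^ α) :=
            mul_le_mul_of_nonneg_left hyα hm0.le
        _ = 2 * ((-(s/2)) ^ α * (-(s/2))) := by ring
    have h3 : 0 < α + 1 := by linarith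
    calc (-(s/2)) ^ (α+1) / (α+1) + (-(s/2)) * (-s) ^ α
        ≤ (-(s/2)) ^ (α+1) / (α+1) + 2 * (-(s/2)) ^ (α+1) := by linarith
      _ = (1/(α+1) + 2) * (-(s/2)) ^ (α+1) := by ring
  have hmul1 : (-(s/2)) ^ (α+1) * (-(s/2)) ^ (-z') = (-(s/2)) ^ (α+1-z') := by
    rw [← Real.rpow_add hm0]; ring_nf
  have hhalf : -(s/2) = (-s) / 2 := by ring
  have hhalf1 : (-(s/2)) ^ (α+1-z') ≤ 4 * (-s) ^ (α+1-z') := by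
    rw [hhalf]; exact rpow_half_le hs0 (by linarith)
  have hhalf2 : (-(s/2)) ^ (α-1) ≤ 4 * (-s) ^ (α-1) := by
    rw [hhalf]; exact rpow_half_le hs0 (by linarith)
  have piece1 : (∫ r in Ioc s (s/2), ‖g r‖)
      ≤ (4 * (M' * (1/(α+1) + 2))) * (-s) ^ (α+1-z') := by
    refine h31.trans ?_
    rw [h32]
    have hc1 : (0:ℝ) < 1/(α+1) + 2 := by
      have : 0 < α + 1 := by linarith
      positivity
    calc ((-(s/2)) ^ (α+1) / (α+1) + (-(s/2)) * (-s) ^ α) * (M' * (-(s/2)) ^ (-z'))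
        ≤ ((1/(α+1) + 2) * (-(s/2)) ^ (α+1)) * (M' * (-(s/2)) ^ (-z')) :=
          mul_le_mul_of_nonneg_right hsum1 (by positivity)
      _ = (M' * (1/(α+1) + 2)) * ((-(s/2)) ^ (α+1) * (-(s/2)) ^ (-z')) := by ring
      _ = (M' * (1/(α+1) + 2)) * (-(s/2)) ^ (α+1-z') := by rw [hmul1]
      _ ≤ (M' * (1/(α+1) + 2)) * (4 * (-s) ^ (α+1-z')) :=
          mul_le_mul_of_nonneg_left hhalf1 (by positivity)
      _ = (4 * (M' * (1/(α+1) + 2))) * (-s) ^ (α+1-z') := by ring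
  -- piece 2
  have hφc : ContinuousOn (fun r => |r| * |f r|) (Icc (s/2) t) :=
    (continuous_abs.continuousOn).mul ((hf.mono Icc_subset_Iic_self).abs)
  have hφint : IntegrableOn (fun r => |r| * |f r|) (Ioc (s/2) t) :=
    (hφc.integrableOn_Icc).mono_set Ioc_subset_Icc_self
  have h41 : (∫ r in Ioc (s/2) t, ‖g r‖)
      ≤ ∫ r in Ioc (s/2) t, (|α| * (-(s/2)) ^ (α-1)) * (|r| * |f r|) := by
    refine setIntegral_mono_on hg1b (hφint.const_mul _) measurableSet_Ioc (fun r hr => ?_)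
    have hra : -(s/2) ≤ r - s := by linarith [hr.1]
    have hrb : -(s/2) ≤ -s := by linarith
    have hrs : 0 < r - s := lt_of_lt_of_le hm0 hra
    rw [hg_def]
    simp only [norm_mul, Real.norm_eq_abs, if_pos hrs, if_pos hs0]
    have h1 : |(r - s) ^ α - (-s) ^ α| ≤ |α| * (-(s/2)) ^ (α-1) * |r| := by
      have := abs_rpow_sub_rpow_le (by linarith : α ≤ 1) hm0 hra hrb
      simpa using this
    calc |(r - s) ^ α - (-s) ^ α| * |f r|
        ≤ (|α| * (-(s/2)) ^ (α-1) * |r|) * |f r| :=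
          mul_le_mul_of_nonneg_right h1 (abs_nonneg _)
      _ = (|α| * (-(s/2)) ^ (α-1)) * (|r| * |f r|) := by ring
  have h42 : (∫ r in Ioc (s/2) t, (|α| * (-(s/2)) ^ (α-1)) * (|r| * |f r|))
      = (|α| * (-(s/2)) ^ (α-1)) * ∫ r in Ioc (s/2) t, |r| * |f r| :=
    integral_const_mul _ _
  have h43 : (∫ r in Ioc (s/2) t, |r| * |f r|)
      = (∫ r in Ioc (s/2) x₀, |r| * |f r|) + ∫ r in Ioc x₀ t, |r| * |f r| := by
    rw [← Set.Ioc_union_Ioc_eq_Ioc hmx hx₀t.le]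
    exact setIntegral_union (Set.Ioc_disjoint_Ioc_of_le le_rfl) measurableSet_Ioc
      (hφint.mono_set (Ioc_subset_Ioc_right hx₀t.le))
      (hφint.mono_set (Ioc_subset_Ioc_left hmx))
  have hρint : IntegrableOn (fun r => M' * (-r) ^ (1-z')) (Ioc (s/2) x₀) := by
    have hc : ContinuousOn (fun r : ℝ => (-r) ^ (1-z')) (Icc (s/2) x₀) := by
      refine ContinuousOn.rpow_const (continuous_neg.continuousOn) (fun r hr => Or.inl ?_)
      have : r ≤ x₀ := hr.2
      intro hcontra
      have : r = 0 := by linarith [neg_eq_zero.1 hcontra]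
      linarith
    exact ((hc.integrableOn_Icc).mono_set Ioc_subset_Icc_self).const_mul _
  have h44 : (∫ r in Ioc (s/2) x₀, |r| * |f r|)
      ≤ ∫ r in Ioc (s/2) x₀, M' * (-r) ^ (1-z') := by
    refine setIntegral_mono_on
      (hφint.mono_set (Ioc_subset_Ioc_right hx₀t.le)) hρint measurableSet_Ioc
      (fun r hr => ?_)
    have hrx : r ≤ x₀ := hr.2
    have hrneg : r < 0 := lt_of_le_of_lt hrx hx₀0
    have habs : |r| = -r := abs_of_neg hrneg
    have h0r : (0:ℝ) < -r := by linarith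
    calc |r| * |f r| ≤ |r| * (M' * |r| ^ (-z')) :=
          mul_le_mul_of_nonneg_left (hbd' r hrx) (abs_nonneg _)
      _ = M' * (|r| ^ (-z') * |r|) := by ring
      _ = M' * (-r) ^ (1-z') := by
          rw [habs, ← Real.rpow_add_one (ne_of_gt h0r) (-z')]
          ring_nf
  have h45 : (∫ r in Ioc (s/2) x₀, M' * (-r) ^ (1-z'))
      = M' * (((-(s/2)) ^ (2-z') - (-x₀) ^ (2-z')) / (2-z')) := by
    rw [integral_const_mul, int_comp₂ (by linarith) hmx,
      show (1 - z' + 1 : ℝ) = 2 - z' from by ring]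
  have h46 : (∫ r in Ioc x₀ t, |r| * |f r|) ≤ (t - x₀) * B₂ := by
    have hconst : IntegrableOn (fun _ : ℝ => B₂) (Ioc x₀ t) :=
      integrableOn_const measure_Ioc_lt_top.ne
    calc (∫ r in Ioc x₀ t, |r| * |f r|) ≤ ∫ _ in Ioc x₀ t, B₂ :=
          setIntegral_mono_on (hφint.mono_set (Ioc_subset_Ioc_left hmx)) hconst
            measurableSet_Ioc (fun r hr => hB₂ r ⟨hr.1.le, hr.2⟩)
      _ = (t - x₀) * B₂ := by
          rw [setIntegral_const, Real.volume_real_Ioc_of_le (by linarith),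
            smul_eq_mul]
  have hmul2 : (-(s/2)) ^ (α-1) * (-(s/2)) ^ (2-z') = (-(s/2)) ^ (α+1-z') := by
    rw [← Real.rpow_add hm0]; ring_nf
  have piece2 : (∫ r in Ioc (s/2) t, ‖g r‖)
      ≤ (4 * (|α| * M' / (2 - z'))) * (-s) ^ (α+1-z')
        + (4 * (|α| * B₂ * (t - x₀))) * (-s) ^ (α-1) := by
    refine h41.trans ?_
    rw [h42]
    have hx2 : (0:ℝ) ≤ (-x₀) ^ (2-z') := Real.rpow_nonneg (by linarith) _
    have hbound : (∫ r in Ioc (s/2) t, |r| * |f r|)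
        ≤ M' * (-(s/2)) ^ (2-z') / (2-z') + (t - x₀) * B₂ := by
      rw [h43]
      have := h44.trans (le_of_eq h45)
      have h45' : M' * (((-(s/2)) ^ (2-z') - (-x₀) ^ (2-z')) / (2-z'))
          ≤ M' * (-(s/2)) ^ (2-z') / (2-z') := by
        rw [mul_div_assoc]
        refine mul_le_mul_of_nonneg_left ?_ hM'
        have hnum : ((-(s/2)) ^ (2-z') - (-x₀) ^ (2-z')) ≤ (-(s/2)) ^ (2-z') := by linarith
        exact (div_le_div_iff_of_pos_right (by linarith : (0:ℝ) < 2 - z')).2 hnum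
      linarith [h46]
    calc (|α| * (-(s/2)) ^ (α-1)) * ∫ r in Ioc (s/2) t, |r| * |f r|
        ≤ (|α| * (-(s/2)) ^ (α-1)) * (M' * (-(s/2)) ^ (2-z') / (2-z') + (t - x₀) * B₂) := by
          refine mul_le_mul_of_nonneg_left hbound (by positivity)
      _ = (|α| * M' / (2-z')) * ((-(s/2)) ^ (α-1) * (-(s/2)) ^ (2-z'))
          + (|α| * B₂ * (t - x₀)) * (-(s/2)) ^ (α-1) := by ring
      _ = (|α| * M' / (2-z')) * (-(s/2)) ^ (α+1-z')
          + (|α| * B₂ * (t - x₀)) * (-(s/2)) ^ (α-1) := by rw [hmul2]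
      _ ≤ (|α| * M' / (2-z')) * (4 * (-s) ^ (α+1-z'))
          + (|α| * B₂ * (t - x₀)) * (4 * (-s) ^ (α-1)) := by
          have c1 : (0:ℝ) ≤ |α| * M' / (2-z') := div_nonneg (by positivity) (by linarith)
          have c2 : (0:ℝ) ≤ |α| * B₂ * (t - x₀) := by
            have : (0:ℝ) ≤ t - x₀ := by linarith
            positivity
          exact add_le_add (mul_le_mul_of_nonneg_left hhalf1 c1)
            (mul_le_mul_of_nonneg_left hhalf2 c2)
      _ = (4 * (|α| * M' / (2 - z'))) * (-s) ^ (α+1-z')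
          + (4 * (|α| * B₂ * (t - x₀))) * (-s) ^ (α-1) := by ring
  calc |∫ r in Ioc s t, g r| ≤ ∫ r in Ioc s t, ‖g r‖ := step1
    _ = (∫ r in Ioc s (s/2), ‖g r‖) + ∫ r in Ioc (s/2) t, ‖g r‖ := step2
    _ ≤ (4 * (M' * (1/(α+1) + 2))) * (-s) ^ (α+1-z')
        + ((4 * (|α| * M' / (2 - z'))) * (-s) ^ (α+1-z')
          + (4 * (|α| * B₂ * (t - x₀))) * (-s) ^ (α-1)) := add_le_add piece1 piece2
    _ = (4 * (M' * (1/(α+1) + 2) + |α| * M' / (2 - z'))) * (-s) ^ (α+1-z')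
        + (4 * (|α| * B₂ * (t - x₀))) * (-s) ^ (α-1) := by ring


lemma integrableOn_comp_neg' {g : ℝ → ℝ} {S : Set ℝ} (hg : IntegrableOn g S) :
    IntegrableOn (fun x => g (-x)) (Neg.neg ⁻¹' S) := by
  have := (MeasurePreserving.integrableOn_comp_preimage (Measure.measurePreserving_neg
      (volume : Measure ℝ)) (Homeomorph.neg ℝ).measurableEmbedding).2 hg
  simpa [Function.comp_def] using this

lemma integrableOn_abs_rpow_Iio {p s₁ : ℝ} (hp : p < -1) (hs₁ : s₁ < 0) :
    IntegrableOn (fun s : ℝ => |s| ^ p) (Iio s₁) := by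
  have h : IntegrableOn (fun s : ℝ => s ^ p) (Ioi (-s₁)) :=
    integrableOn_Ioi_rpow_of_lt hp (by linarith)
  have h2 := integrableOn_comp_neg' h
  simp only [neg_preimage, neg_Ioi, neg_neg] at h2
  refine h2.congr_fun (fun x hx => ?_) measurableSet_Iio
  simp only [mem_Iio] at hx
  rw [abs_of_neg (by linarith)]

lemma integrableOn_posrpow {q : ℝ} (a b : ℝ) (hq : -1 < q) :
    IntegrableOn (fun u : ℝ => if 0 < u then u ^ q else 0) (Ioc a b) := by
  have h1 : IntegrableOn (fun u : ℝ => u ^ q) (Ioc 0 (max b 1)) :=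
    (intervalIntegrable_iff_integrableOn_Ioc_of_le (by positivity)).1
      (intervalIntegral.intervalIntegrable_rpow' hq)
  have h2 : IntegrableOn (fun u : ℝ => u ^ q) (Ioi 0 ∩ Ioc a b) :=
    h1.mono_set (fun x hx => ⟨hx.1, hx.2.2.trans (le_max_left _ _)⟩)
  have h3 : (fun u : ℝ => if 0 < u then u ^ q else 0)
      = (Ioi 0).indicator (fun u => u ^ q) := by
    funext u; simp [Set.indicator_apply, mem_Ioi]
  rw [h3, IntegrableOn, integrable_indicator_iff measurableSet_Ioi, IntegrableOn,
    Measure.restrict_restrict measurableSet_Ioi]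
  exact h2

lemma meas_ell (t α : ℝ) {F : ℝ → ℝ} (hF : Continuous F) :
    StronglyMeasurable (fun s : ℝ => ∫ r in Ioc s t,
      ((if 0 < r - s then (r - s) ^ α else 0) - (if 0 < -s then (-s) ^ α else 0)) * F r) := by
  have hG : StronglyMeasurable (fun p : ℝ × ℝ =>
      ({q : ℝ × ℝ | q.1 < q.2 ∧ q.2 ≤ t}).indicator
        (fun q => ((if 0 < q.2 - q.1 then (q.2 - q.1) ^ α else 0)
          - (if 0 < -q.1 then (-q.1) ^ α else 0)) * F q.2) p) := by
    apply Measurable.stronglyMeasurable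
    apply Measurable.indicator
    · exact (((measurable_posrpow α).comp (measurable_snd.sub measurable_fst)).sub
        ((measurable_posrpow α).comp measurable_fst.neg)).mul (hF.measurable.comp measurable_snd)
    · exact (measurableSet_lt measurable_fst measurable_snd).inter
        (measurableSet_le measurable_snd measurable_const)
  have h2 := StronglyMeasurable.integral_prod_right' (ν := (volume : Measure ℝ)) hG
  have h3 : (fun s : ℝ => ∫ r in Ioc s t,
      ((if 0 < r - s then (r - s) ^ α else 0) - (if 0 < -s then (-s) ^ α else 0)) * F r)
      = fun s : ℝ => ∫ r, ({q : ℝ × ℝ | q.1 < q.2 ∧ q.2 ≤ t}).indicator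
        (fun q => ((if 0 < q.2 - q.1 then (q.2 - q.1) ^ α else 0)
          - (if 0 < -q.1 then (-q.1) ^ α else 0)) * F q.2) (s, r) := by
    funext s
    rw [← integral_indicator measurableSet_Ioc]
    congr 1
  rw [h3]
  exact h2

lemma nearC {t α s B : ℝ} (hα1 : (-1:ℝ) < α) {f : ℝ → ℝ} (hf : ContinuousOn f (Iic t))
    (hs : s < t) (hB : ∀ r ∈ Icc s t, |f r| ≤ B) :
    |∫ r in Ioc s t, ((if 0 < r - s then (r - s) ^ α else 0)
        - (if 0 < -s then (-s) ^ α else 0)) * f r|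
      ≤ ((t - s) ^ (α+1) / (α+1) + (t - s) * (if 0 < -s then (-s) ^ α else 0)) * B := by
  set c : ℝ := if 0 < -s then (-s) ^ α else 0 with hc_def
  have hc : 0 ≤ c := by
    rw [hc_def]; split
    · exact Real.rpow_nonneg (by linarith [‹0 < -s›]) _
    · exact le_rfl
  have hB0 : 0 ≤ B := le_trans (abs_nonneg _) (hB s ⟨le_rfl, hs.le⟩)
  have hpow : IntegrableOn (fun r => (r - s) ^ α) (Ioc s t) := by
    have h1 : IntervalIntegrable (fun x : ℝ => x ^ α) volume 0 (t - s) :=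
      intervalIntegral.intervalIntegrable_rpow' hα1
    have h2 := h1.comp_sub_right s
    rw [zero_add, sub_add_cancel] at h2
    exact (intervalIntegrable_iff_integrableOn_Ioc_of_le hs.le).1 h2
  have hψint : IntegrableOn (fun r => ((r - s) ^ α + c) * B) (Ioc s t) :=
    (hpow.add (integrableOn_const measure_Ioc_lt_top.ne)).mul_const B
  have h1 : |∫ r in Ioc s t, ((if 0 < r - s then (r - s) ^ α else 0) - c) * f r|
      ≤ ∫ r in Ioc s t, ‖((if 0 < r - s then (r - s) ^ α else 0) - c) * f r‖ := by
    rw [← Real.norm_eq_abs]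
    exact norm_integral_le_integral_norm _
  have h2 : (∫ r in Ioc s t, ‖((if 0 < r - s then (r - s) ^ α else 0) - c) * f r‖)
      ≤ ∫ r in Ioc s t, ((r - s) ^ α + c) * B := by
    refine setIntegral_mono_on (part1 hα1 hf hs).norm hψint measurableSet_Ioc (fun r hr => ?_)
    have hrs : 0 < r - s := sub_pos.2 hr.1
    rw [norm_mul, Real.norm_eq_abs, Real.norm_eq_abs, if_pos hrs]
    have ha : |(r - s) ^ α - c| ≤ (r - s) ^ α + c := by
      refine (abs_sub _ _).trans ?_
      rw [abs_of_nonneg (Real.rpow_nonneg hrs.le _), abs_of_nonneg hc]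
    exact mul_le_mul ha (hB r ⟨hr.1.le, hr.2⟩) (abs_nonneg _) (by positivity)
  have h3 : (∫ r in Ioc s t, ((r - s) ^ α + c) * B)
      = ((t - s) ^ (α+1) / (α+1) + (t - s) * c) * B := by
    rw [integral_mul_const]
    congr 1
    rw [integral_add hpow (integrableOn_const measure_Ioc_lt_top.ne),
      int_comp₁ hα1 (by linarith) hs.le, setIntegral_const, Real.volume_real_Ioc_of_le (by linarith),
      smul_eq_mul]
  exact h1.trans (h2.trans (le_of_eq h3))

lemma far_sq_le {a b u v L : ℝ} (ha : 0 ≤ a) (hb : 0 ≤ b) (hu : 0 ≤ u) (hv : 0 ≤ v)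
    (h : |L| ≤ a * u + b * v) : L ^ 2 ≤ 2 * a ^ 2 * u ^ 2 + 2 * b ^ 2 * v ^ 2 := by
  have h3 : |L| ^ 2 ≤ (a * u + b * v) ^ 2 := pow_le_pow_left₀ (abs_nonneg _) h 2
  nlinarith [sq_abs L, sq_nonneg (a * u - b * v)]

lemma near_sq_le {u u₁ v v₁ c B L : ℝ} (hu0 : 0 ≤ u) (hu1 : u ≤ u₁) (hv0 : 0 ≤ v) (hv1 : v ≤ v₁)
    (hc : 0 ≤ c) (hB : 0 ≤ B) (h : |L| ≤ (u + v * c) * B) :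
    L ^ 2 ≤ 2 * B ^ 2 * u₁ ^ 2 + 2 * B ^ 2 * v₁ ^ 2 * c ^ 2 := by
  have h1 : u ^ 2 ≤ u₁ ^ 2 := by nlinarith
  have h2 : (v * c) ^ 2 ≤ (v₁ * c) ^ 2 := by
    have := mul_le_mul_of_nonneg_right hv1 hc
    nlinarith [mul_nonneg hv0 hc]
  have h3 : |L| ^ 2 ≤ ((u + v * c) * B) ^ 2 := pow_le_pow_left₀ (abs_nonneg _) h 2
  nlinarith [sq_abs L, sq_nonneg (u - v * c), sq_nonneg B]

/-- Fix `t ∈ ℝ` and `α ∈ (−1/2,0) ∪ (0,1/2)`. Let `f` be continuous on `(−∞,t]`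
and set `ℓ_t(s) := ∫_s^t ((r−s)_+^α − (−s)_+^α) f(r) dr` (the integral converges
absolutely for every `s < t`). If there exist `ζ > α + 3/2`, `M > 0` and
`x₀ < min(t,0)` with `|f(u)| ≤ M |u|^{−ζ}` for all `u ≤ x₀`, then
`∫_{−∞}^t ℓ_t(s)² ds < ∞`. -/
theorem stmt6 (t α : ℝ) (hα : α ∈ Set.Ioo (-(1/2) : ℝ) (1/2)) (hα0 : α ≠ 0)
    (f : ℝ → ℝ) (hf : ContinuousOn f (Set.Iic t))
    (z M x₀ : ℝ) (hz : α + 3/2 < z) (hM : 0 < M) (hx₀ : x₀ < min t 0)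
    (hbd : ∀ u ≤ x₀, |f u| ≤ M * |u| ^ (-z)) :
    (∀ s < t, MeasureTheory.IntegrableOn
      (fun r => ((if 0 < r - s then (r - s) ^ α else 0) - (if 0 < -s then (-s) ^ α else 0)) * f r)
      (Set.Ioc s t)) ∧
    MeasureTheory.IntegrableOn
      (fun s => (∫ r in Set.Ioc s t,
        ((if 0 < r - s then (r - s) ^ α else 0) - (if 0 < -s then (-s) ^ α else 0)) * f r) ^ 2)
      (Set.Iio t) := by
  obtain ⟨hα1, hα2⟩ := hα
  have hα1' : (-1:ℝ) < α := by linarith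
  have hx₀t : x₀ < t := lt_of_lt_of_le hx₀ (min_le_left _ _)
  have hx₀0 : x₀ < 0 := lt_of_lt_of_le hx₀ (min_le_right _ _)
  refine ⟨fun s hs => part1 hα1' hf hs, ?_⟩
  -- exponent and constant adjustments
  set z' : ℝ := min z (α/2 + 7/4) with hz'def
  have hz'1 : α + 3/2 < z' := lt_min hz (by linarith)
  have hz'2 : z' < 2 := lt_of_le_of_lt (min_le_right _ _) (by linarith)
  have hz'z : z' ≤ z := min_le_left _ _
  have hx₀abs : 0 < |x₀| := abs_pos.2 (ne_of_lt hx₀0)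
  set M' : ℝ := M * |x₀| ^ (z' - z) with hM'def
  have hM'0 : 0 ≤ M' := by positivity
  have hbd' : ∀ u ≤ x₀, |f u| ≤ M' * |u| ^ (-z') := by
    intro u hu
    have hu0 : u < 0 := lt_of_le_of_lt hu hx₀0
    have huabs : |x₀| ≤ |u| := by rw [abs_of_neg hu0, abs_of_neg hx₀0]; linarith
    have h0u : 0 < |u| := lt_of_lt_of_le hx₀abs huabs
    calc |f u| ≤ M * |u| ^ (-z) := hbd u hu
      _ = M * (|u| ^ (-z') * |u| ^ (z' - z)) := by
          rw [← Real.rpow_add h0u]; ring_nf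
      _ ≤ M * (|u| ^ (-z') * |x₀| ^ (z' - z)) := by
          refine mul_le_mul_of_nonneg_left (mul_le_mul_of_nonneg_left
            (Real.rpow_le_rpow_of_nonpos hx₀abs huabs (by linarith))
            (Real.rpow_nonneg (abs_nonneg _) _)) hM.le
      _ = M' * |u| ^ (-z') := by rw [hM'def]; ring
  -- bound for |r| * |f r| on [x₀, t]
  obtain ⟨B₂, hB₂'⟩ := (isCompact_Icc (a := x₀) (b := t)).exists_bound_of_continuousOn
    ((continuous_abs.continuousOn).mul ((hf.mono Icc_subset_Iic_self).abs))
  have hB₂ : ∀ r ∈ Icc x₀ t, |r| * |f r| ≤ B₂ := fun r hr => by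
    have h := hB₂' r hr
    simp only [Pi.mul_apply] at h
    rwa [Real.norm_eq_abs, abs_of_nonneg (mul_nonneg (abs_nonneg r) (abs_nonneg (f r)))] at h
  have hB₂0 : 0 ≤ B₂ := le_trans (by positivity) (hB₂ x₀ ⟨le_rfl, hx₀t.le⟩)
  set s₁ : ℝ := min (2 * x₀) (-2) with hs₁def
  have hs₁x : s₁ ≤ 2 * x₀ := min_le_left _ _
  have hs₁2 : s₁ ≤ -2 := min_le_right _ _
  have hs₁0 : s₁ < 0 := lt_of_le_of_lt hs₁2 (by norm_num)
  have hs₁t : s₁ < t := by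
    have : 2 * x₀ < t := by linarith
    exact lt_of_le_of_lt hs₁x this
  -- measurability
  have hFc : Continuous (fun r : ℝ => f (min r t)) :=
    hf.comp_continuous (continuous_id.min continuous_const) (fun x => min_le_right x t)
  have hℓeq : (fun s : ℝ => ∫ r in Ioc s t,
      ((if 0 < r - s then (r - s) ^ α else 0) - (if 0 < -s then (-s) ^ α else 0)) * f r)
      = (fun s : ℝ => ∫ r in Ioc s t,
      ((if 0 < r - s then (r - s) ^ α else 0) - (if 0 < -s then (-s) ^ α else 0))
        * f (min r t)) := by
    funext s
    refine setIntegral_congr_fun measurableSet_Ioc (fun r hr => ?_)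
    rw [min_eq_left hr.2]
  have hSM : StronglyMeasurable (fun s : ℝ => ∫ r in Ioc s t,
      ((if 0 < r - s then (r - s) ^ α else 0) - (if 0 < -s then (-s) ^ α else 0)) * f r) := by
    rw [hℓeq]
    exact meas_ell t α hFc
  have hSM2 : StronglyMeasurable (fun s : ℝ => (∫ r in Ioc s t,
      ((if 0 < r - s then (r - s) ^ α else 0) - (if 0 < -s then (-s) ^ α else 0)) * f r) ^ 2) := by
    have h := hSM.mul hSM
    simpa [pow_two, Pi.mul_def] using h
  -- far region
  set A₁ : ℝ := 4 * (M' * (1/(α+1) + 2) + |α| * M' / (2 - z')) with hA₁def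
  set A₂ : ℝ := 4 * (|α| * B₂ * (t - x₀)) with hA₂def
  have hA₁0 : 0 ≤ A₁ := by
    rw [hA₁def]
    have h1 : (0:ℝ) ≤ M' * (1/(α+1) + 2) := by
      have : (0:ℝ) < α + 1 := by linarith
      positivity
    have h2 : (0:ℝ) ≤ |α| * M' / (2 - z') := div_nonneg (by positivity) (by linarith)
    linarith
  have hA₂0 : 0 ≤ A₂ := by
    rw [hA₂def]
    have : (0:ℝ) ≤ t - x₀ := by linarith
    positivity
  have hIfar : IntegrableOn (fun s : ℝ => (∫ r in Ioc s t,
      ((if 0 < r - s then (r - s) ^ α else 0) - (if 0 < -s then (-s) ^ α else 0)) * f r) ^ 2)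
      (Iio s₁) := by
    have hp₁ : 2*(α+1-z') < -1 := by linarith
    have hp₂ : 2*(α-1) < -1 := by linarith
    have hdom : IntegrableOn (fun s : ℝ =>
        2 * A₁^2 * |s| ^ (2*(α+1-z')) + 2 * A₂^2 * |s| ^ (2*(α-1))) (Iio s₁) :=
      ((integrableOn_abs_rpow_Iio hp₁ hs₁0).const_mul _).add
        ((integrableOn_abs_rpow_Iio hp₂ hs₁0).const_mul _)
    refine Integrable.mono' hdom (hSM2.aestronglyMeasurable.restrict) ?_
    rw [ae_restrict_iff' measurableSet_Iio]
    refine ae_of_all _ (fun s hs => ?_)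
    simp only [mem_Iio] at hs
    have hs0 : s < 0 := lt_trans hs hs₁0
    have h0s : (0:ℝ) < -s := by linarith
    have hkb := keybound hα1 hα2 hz'1 hz'2 hf hx₀t hx₀0 hM'0 hbd' hB₂
      (by linarith : s ≤ -2) (by linarith : s ≤ 2 * x₀)
    set L : ℝ := ∫ r in Ioc s t,
      ((if 0 < r - s then (r - s) ^ α else 0) - (if 0 < -s then (-s) ^ α else 0)) * f r with hL
    have key : |L| ≤ A₁ * (-s) ^ (α+1-z') + A₂ * (-s) ^ (α-1) := hkb
    have hu : (0:ℝ) ≤ (-s) ^ (α+1-z') := Real.rpow_nonneg h0s.le _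
    have hv : (0:ℝ) ≤ (-s) ^ (α-1) := Real.rpow_nonneg h0s.le _
    have habs : |s| = -s := abs_of_neg hs0
    rw [Real.norm_eq_abs, abs_of_nonneg (sq_nonneg _), habs]
    have e1 : ((-s) ^ (α+1-z'))^2 = (-s) ^ (2*(α+1-z')) := sq_rpow _ h0s.le
    have e2 : ((-s) ^ (α-1))^2 = (-s) ^ (2*(α-1)) := sq_rpow _ h0s.le
    rw [← e1, ← e2]
    exact far_sq_le hA₁0 hA₂0 hu hv key
  -- near region
  obtain ⟨B, hB'⟩ := (isCompact_Icc (a := s₁) (b := t)).exists_bound_of_continuousOn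
    (hf.mono Icc_subset_Iic_self)
  have hBB : ∀ r ∈ Icc s₁ t, |f r| ≤ B := fun r hr => by
    have h := hB' r hr
    rwa [Real.norm_eq_abs] at h
  have hB0 : 0 ≤ B := le_trans (abs_nonneg _) (hBB t ⟨hs₁t.le, le_rfl⟩)
  have hInear : IntegrableOn (fun s : ℝ => (∫ r in Ioc s t,
      ((if 0 < r - s then (r - s) ^ α else 0) - (if 0 < -s then (-s) ^ α else 0)) * f r) ^ 2)
      (Ico s₁ t) := by
    have hχ : IntegrableOn (fun s : ℝ => if 0 < -s then ((-s) ^ α)^2 else 0) (Ico s₁ t) := by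
      have h1 : IntegrableOn (fun u : ℝ => if 0 < u then u ^ (2*α) else 0)
          (Ioc (-t) (-s₁)) := integrableOn_posrpow _ _ (by linarith)
      have h2 : (fun u : ℝ => if 0 < u then (u ^ α)^2 else 0)
          = (fun u : ℝ => if 0 < u then u ^ (2*α) else 0) := by
        funext u; split
        · exact sq_rpow α (le_of_lt ‹0 < u›)
        · rfl
      rw [← h2] at h1
      have h3 := integrableOn_comp_neg' h1
      have h4 : Neg.neg ⁻¹' Ioc (-t) (-s₁) = Ico s₁ t := by
        ext x
        simp only [mem_preimage, mem_Ioc, mem_Ico]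
        constructor
        · rintro ⟨h5, h6⟩; constructor <;> linarith
        · rintro ⟨h5, h6⟩; constructor <;> linarith
      rwa [h4] at h3
    have hdom : IntegrableOn (fun s : ℝ =>
        2 * B^2 * ((t - s₁) ^ (α+1) / (α+1))^2
          + 2 * B^2 * (t - s₁)^2 * (if 0 < -s then ((-s) ^ α)^2 else 0)) (Ico s₁ t) :=
      (integrableOn_const measure_Ico_lt_top.ne).add (hχ.const_mul _)
    refine Integrable.mono' hdom (hSM2.aestronglyMeasurable.restrict) ?_
    rw [ae_restrict_iff' measurableSet_Ico]
    refine ae_of_all _ (fun s hs => ?_)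
    have hst : s < t := hs.2
    have hkey := nearC hα1' hf hst (fun r hr => hBB r ⟨le_trans hs.1 hr.1, hr.2⟩)
    set c : ℝ := if 0 < -s then (-s) ^ α else 0 with hc_def
    have hc0 : 0 ≤ c := by
      rw [hc_def]; split
      · exact Real.rpow_nonneg (by linarith [‹0 < -s›]) _
      · exact le_rfl
    have hcsq : c^2 = if 0 < -s then ((-s) ^ α)^2 else 0 := by
      rw [hc_def]; split
      · rfl
      · exact zero_pow (by norm_num)
    set L : ℝ := ∫ r in Ioc s t,
      ((if 0 < r - s then (r - s) ^ α else 0) - (if 0 < -s then (-s) ^ α else 0)) * f r with hL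
    have hu0 : (0:ℝ) ≤ (t - s) ^ (α+1) / (α+1) := by
      have h1 : (0:ℝ) < α + 1 := by linarith
      have h2 : (0:ℝ) ≤ (t - s) ^ (α+1) := Real.rpow_nonneg (by linarith) _
      positivity
    have hu1 : (t - s) ^ (α+1) / (α+1) ≤ (t - s₁) ^ (α+1) / (α+1) := by
      have h1 : (0:ℝ) < α + 1 := by linarith
      have h2 : (t - s) ^ (α+1) ≤ (t - s₁) ^ (α+1) :=
        Real.rpow_le_rpow (by linarith) (by linarith [hs.1]) h1.le
      exact (div_le_div_iff_of_pos_right h1).2 h2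
    have hv0 : (0:ℝ) ≤ t - s := by linarith
    have hv1 : t - s ≤ t - s₁ := by linarith [hs.1]
    rw [Real.norm_eq_abs, abs_of_nonneg (sq_nonneg _), ← hcsq]
    exact near_sq_le hu0 hu1 hv0 hv1 hc0 hB0 hkey
  rw [← Set.Iio_union_Ico_eq_Iio hs₁t.le]
  exact hIfar.union hInear
end

section
/- Let α ∈ (−1/2, 1/2), let s₀ < t be real numbers and let f : [s₀, t] → ℝ be continuous. Then ∫_{s₀}^t ( ∫_s^t |(r−s)^α − (−s)_+^α| · |f(r)| dr )² ds < ∞; that is, the function ℓ_t(s) = ∫_s^t ((r−s)^α − (−s)_+^α) f(r) dr is square-integrable on every interval [s₀, t]. -/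
open MeasureTheory Set Filter

/-- Let `α ∈ (−1/2, 1/2)`, `s₀ < t` and `f` continuous on `[s₀,t]`. Then
`∫_{s₀}^t (∫_s^t |(r−s)^α − (−s)_+^α| ⬝ |f(r)| dr)² ds < ∞`, i.e. the function
`ℓ_t` is square-integrable on `[s₀,t]`. -/
theorem stmt7 (α s₀ t : ℝ) (hα : α ∈ Set.Ioo (-(1/2) : ℝ) (1/2)) (hst : s₀ < t)
    (f : ℝ → ℝ) (hf : ContinuousOn f (Set.Icc s₀ t)) :
    MeasureTheory.IntegrableOn
      (fun s => (∫ r in Set.Ioc s t,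
        |(r - s) ^ α - (if 0 < -s then (-s) ^ α else 0)| * |f r|) ^ 2)
      (Set.Icc s₀ t) := by
  obtain ⟨hα1, hα2⟩ := hα
  obtain ⟨M, hM⟩ := (isCompact_Icc : IsCompact (Icc s₀ t)).exists_bound_of_continuousOn hf
  set M0 : ℝ := max M 0 with hM0
  have hM0nn : 0 ≤ M0 := le_max_right _ _
  have hMb : ∀ x ∈ Icc s₀ t, |f x| ≤ M0 := fun x hx =>
    le_trans (by simpa [Real.norm_eq_abs] using hM x hx) (le_max_left _ _)
  set c : ℝ → ℝ := fun s => if 0 < -s then (-s) ^ α else 0 with hcdef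
  have hc_nonneg : ∀ s, 0 ≤ c s := by
    intro s
    simp only [hcdef]
    split
    · exact Real.rpow_nonneg (by linarith) _
    · exact le_refl 0
  have hc_meas : Measurable c := by
    apply Measurable.ite
    · exact measurableSet_lt measurable_const measurable_neg
    · fun_prop
    · exact measurable_const
  set g : ℝ → ℝ := fun s => ∫ r in Set.Ioc s t, |(r - s) ^ α - c s| * |f r| with hgdef
  -- measurability of g
  set f' : ℝ → ℝ := (Icc s₀ t).indicator f with hf'def
  have hf'm : AEStronglyMeasurable f' volume :=
    (aestronglyMeasurable_indicator_iff measurableSet_Icc).2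
      (hf.aestronglyMeasurable measurableSet_Icc)
  set F : ℝ × ℝ → ℝ := fun p =>
    ({q : ℝ × ℝ | q.1 < q.2 ∧ q.2 ≤ t}).indicator
      (fun q => |(q.2 - q.1) ^ α - c q.1| * |f' q.2|) p with hFdef
  have hFm : AEStronglyMeasurable F ((volume.restrict (Icc s₀ t)).prod volume) := by
    apply AEStronglyMeasurable.indicator
    · apply AEStronglyMeasurable.mul
      · have hm : Measurable fun q : ℝ × ℝ => |(q.2 - q.1) ^ α - c q.1| := by
          apply Measurable.abs
          apply Measurable.sub
          · fun_prop
          · exact hc_meas.comp measurable_fst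
        exact hm.aestronglyMeasurable
      · have := hf'm.comp_snd (μ := volume.restrict (Icc s₀ t))
        exact this.norm.congr (Eventually.of_forall fun p => (Real.norm_eq_abs _))
    · exact (measurableSet_lt measurable_fst measurable_snd).inter
        (measurableSet_le measurable_snd measurable_const)
  have hgm : AEStronglyMeasurable g (volume.restrict (Icc s₀ t)) := by
    have h1 : AEStronglyMeasurable (fun s => ∫ r, F (s, r)) (volume.restrict (Icc s₀ t)) :=
      hFm.integral_prod_right'
    apply h1.congr
    filter_upwards [ae_restrict_mem measurableSet_Icc] with s hs
    have e1 : (fun r => F (s, r)) = (Ioc s t).indicator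
        (fun r => |(r - s) ^ α - c s| * |f' r|) := by
      funext r
      simp only [hFdef, Set.indicator_apply, Set.mem_setOf_eq, Set.mem_Ioc]
    rw [e1, integral_indicator measurableSet_Ioc]
    apply setIntegral_congr_fun measurableSet_Ioc
    intro r hr
    have hrm : r ∈ Icc s₀ t := ⟨le_trans hs.1 hr.1.le, hr.2⟩
    simp only [hf'def, Set.indicator_of_mem hrm]
  -- pointwise bound
  have hαpos : (0:ℝ) < α + 1 := by linarith
  set K₁ : ℝ := M0 * ((t - s₀) ^ (α + 1) / (α + 1)) with hK1
  set K₂ : ℝ := M0 * (t - s₀) with hK2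
  have hbound : ∀ s ∈ Icc s₀ t, g s ≤ K₁ + K₂ * c s := by
    intro s hs
    have hs1 : s₀ ≤ s := hs.1
    have hs2 : s ≤ t := hs.2
    have h2 : IntervalIntegrable (fun r : ℝ => (r - s) ^ α) volume s t := by
      have h1 : IntervalIntegrable (fun x : ℝ => x ^ α) volume 0 (t - s) :=
        intervalIntegral.intervalIntegrable_rpow' (by linarith)
      simpa using h1.comp_sub_right s
    have hInt : IntegrableOn (fun r => ((r - s) ^ α + c s) * M0) (Ioc s t) volume := by
      have h3 := (h2.add (intervalIntegrable_const (c := c s))).mul_const M0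
      rwa [intervalIntegrable_iff_integrableOn_Ioc_of_le hs2] at h3
    have hle : g s ≤ ∫ r in Ioc s t, ((r - s) ^ α + c s) * M0 := by
      apply integral_mono_of_nonneg
      · exact Eventually.of_forall fun r => by positivity
      · exact hInt
      · filter_upwards [ae_restrict_mem measurableSet_Ioc] with r hr
        have ha : 0 ≤ (r - s) ^ α := Real.rpow_nonneg (by linarith [hr.1]) _
        have h1 : |(r - s) ^ α - c s| ≤ (r - s) ^ α + c s := by
          calc |(r - s) ^ α - c s| ≤ |(r - s) ^ α| + |c s| := abs_sub _ _
            _ = (r - s) ^ α + c s := by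
               rw [abs_of_nonneg ha, abs_of_nonneg (hc_nonneg s)]
        have h2' : |f r| ≤ M0 := hMb r ⟨le_trans hs1 hr.1.le, hr.2⟩
        exact mul_le_mul h1 h2' (abs_nonneg _) (add_nonneg ha (hc_nonneg s))
    have hval : (∫ r in Ioc s t, ((r - s) ^ α + c s) * M0)
        = ((t - s) ^ (α + 1) / (α + 1) + c s * (t - s)) * M0 := by
      rw [← intervalIntegral.integral_of_le hs2, intervalIntegral.integral_mul_const]
      congr 1
      rw [intervalIntegral.integral_add h2 intervalIntegrable_const]
      congr 1
      · rw [intervalIntegral.integral_comp_sub_right (fun x => x ^ α) s]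
        rw [integral_rpow (Or.inl (by linarith))]
        rw [sub_self, Real.zero_rpow (by linarith : α + 1 ≠ 0), sub_zero]
      · simp [smul_eq_mul, mul_comm]
    have hfin : ((t - s) ^ (α + 1) / (α + 1) + c s * (t - s)) * M0 ≤ K₁ + K₂ * c s := by
      have hts : (t - s) ^ (α + 1) ≤ (t - s₀) ^ (α + 1) :=
        Real.rpow_le_rpow (by linarith) (by linarith) (by linarith)
      have h3 : (t - s) ^ (α + 1) / (α + 1) ≤ (t - s₀) ^ (α + 1) / (α + 1) :=
        (div_le_div_iff_of_pos_right hαpos).2 hts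
      have hcs := hc_nonneg s
      have h4 : c s * (t - s) ≤ c s * (t - s₀) := by nlinarith
      have h5 := mul_le_mul_of_nonneg_right (add_le_add h3 h4) hM0nn
      rw [hK1, hK2]
      nlinarith [h5]
    calc g s ≤ _ := hle
      _ = _ := hval
      _ ≤ K₁ + K₂ * c s := hfin
  -- L² membership of c
  have hcL2 : MemLp c 2 (volume.restrict (Icc s₀ t)) := by
    rw [memLp_two_iff_integrable_sq hc_meas.aestronglyMeasurable]
    have e : (fun s => c s ^ 2) = (Iio (0:ℝ)).indicator (fun s => (-s) ^ (α * 2)) := by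
      funext s
      by_cases h : s < 0
      · rw [Set.indicator_of_mem (Set.mem_Iio.2 h)]
        simp only [hcdef]
        rw [if_pos (by linarith)]
        rw [← Real.rpow_natCast ((-s) ^ α) 2, ← Real.rpow_mul (by linarith)]
        norm_num
      · rw [Set.indicator_of_notMem (fun hh => h (Set.mem_Iio.1 hh))]
        simp only [hcdef]
        rw [if_neg (by simpa using h)]
        norm_num
    rw [e]
    apply MeasureTheory.IntegrableOn.integrable_indicator _ measurableSet_Iio
    rw [IntegrableOn, Measure.restrict_restrict measurableSet_Iio]
    have hII : IntervalIntegrable (fun s : ℝ => (-s) ^ (α * 2)) volume s₀ 0 := by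
      have h1 : IntervalIntegrable (fun x : ℝ => x ^ (α * 2)) volume (-s₀) 0 :=
        intervalIntegral.intervalIntegrable_rpow' (by linarith)
      have h6 := (IntervalIntegrable.iff_comp_neg (f := fun x : ℝ => x ^ (α * 2)) (a := -s₀) (b := 0) (by simp)).mp h1
      simpa using h6
    have hIcc : IntegrableOn (fun s : ℝ => (-s) ^ (α * 2)) (uIcc s₀ 0) volume := by
      rw [← intervalIntegrable_iff']
      exact hII
    exact hIcc.mono_set fun x hx => Set.mem_uIcc.2 (Or.inl ⟨hx.2.1, hx.1.le⟩)
  have hgL2 : MemLp g 2 (volume.restrict (Icc s₀ t)) := by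
    have hK : MemLp (fun s => K₁ + K₂ * c s) 2 (volume.restrict (Icc s₀ t)) :=
      (memLp_const K₁).add (hcL2.const_mul K₂)
    apply hK.of_le hgm
    filter_upwards [ae_restrict_mem measurableSet_Icc] with s hs
    have hgnn : 0 ≤ g s := integral_nonneg fun r => by positivity
    rw [Real.norm_eq_abs, Real.norm_eq_abs, abs_of_nonneg hgnn]
    exact le_trans (hbound s hs) (le_abs_self _)
  exact (memLp_two_iff_integrable_sq hgm).1 hgL2
end

section
/- Let α ∈ (−1/2, 0) ∪ (0, 1/2), let s < t ≤ 0 be real numbers, and let f : [t,0] → ℝ be measurable with ∫_t^0 |r f(r)| dr < ∞. Then | ∫_t^0 ((r−s)^α − (−s)^α) f(r) dr | ≤ |α| · (1 − t/s)^{α−1} · |s|^{α−1} · ∫_t^0 |r f(r)| dr, the integral converging absolutely. -/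
open MeasureTheory Set Filter

/-- Let `α ∈ (−1/2,0) ∪ (0,1/2)`, `s < t ≤ 0`, and `f : [t,0] → ℝ` measurable with
`∫_t^0 |r f(r)| dr < ∞`. Then
`|∫_t^0 ((r−s)^α − (−s)^α) f(r) dr|
  ≤ |α| (1 − t/s)^{α−1} |s|^{α−1} ∫_t^0 |r f(r)| dr`,
the integral converging absolutely. -/
theorem stmt9 (α t s : ℝ) (hα : α ∈ Set.Ioo (-(1/2) : ℝ) (1/2)) (hα0 : α ≠ 0)
    (hst : s < t) (ht : t ≤ 0)
    (f : ℝ → ℝ) (hf : Measurable f)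
    (hint : MeasureTheory.IntegrableOn (fun r => |r * f r|) (Set.Ioc t 0)) :
    MeasureTheory.IntegrableOn (fun r => ((r - s) ^ α - (-s) ^ α) * f r) (Set.Ioc t 0) ∧
    |∫ r in Set.Ioc t (0 : ℝ), ((r - s) ^ α - (-s) ^ α) * f r|
      ≤ |α| * (1 - t / s) ^ (α - 1) * |s| ^ (α - 1) * ∫ r in Set.Ioc t (0 : ℝ), |r * f r| := by
  have hs0 : s < 0 := lt_of_lt_of_le hst ht
  have hts : (0:ℝ) < t - s := sub_pos.mpr hst
  -- rewrite the constant
  have hsne : s ≠ 0 := ne_of_lt hs0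
  have hnsne : (-s) ≠ 0 := neg_ne_zero.mpr hsne
  have heq : 1 - t / s = (t - s) / (-s) := by
    rw [one_sub_div hsne, div_eq_div_iff hsne hnsne]; ring
  have h1 : (0:ℝ) ≤ 1 - t / s := by rw [heq]; exact div_nonneg hts.le (by linarith)
  have hconst : (1 - t / s) ^ (α - 1) * |s| ^ (α - 1) = (t - s) ^ (α - 1) := by
    rw [abs_of_neg hs0, ← Real.mul_rpow h1 (by linarith)]
    congr 1
    rw [heq]
    exact div_mul_cancel₀ _ hnsne
  -- MVT bound
  have hkey : ∀ x y : ℝ, t - s ≤ x → t - s ≤ y →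
      |x ^ α - y ^ α| ≤ |α| * (t - s) ^ (α - 1) * |x - y| := by
    intro x y hx hy
    have h := Convex.norm_image_sub_le_of_norm_hasDerivWithin_le
      (f := fun z : ℝ => z ^ α) (f' := fun z : ℝ => α * z ^ (α - 1))
      (s := Set.Ici (t - s)) (C := |α| * (t - s) ^ (α - 1))
      (fun z hz => (Real.hasDerivAt_rpow_const
        (Or.inl (ne_of_gt (lt_of_lt_of_le hts hz)))).hasDerivWithinAt)
      (fun z hz => by
        have hz0 : (0:ℝ) < z := lt_of_lt_of_le hts hz
        rw [Real.norm_eq_abs, abs_mul, abs_of_pos (Real.rpow_pos_of_pos hz0 _)]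
        have := Real.rpow_le_rpow_of_nonpos hts hz (by nlinarith [hα.2] : α - 1 ≤ 0)
        have h0 : (0:ℝ) ≤ |α| := abs_nonneg α
        nlinarith)
      (convex_Ici _) hy hx
    simpa [Real.norm_eq_abs] using h
  set C := |α| * (t - s) ^ (α - 1) with hC
  have hC0 : 0 ≤ C := by positivity
  have hbd : ∀ r ∈ Set.Ioc t (0:ℝ),
      |((r - s) ^ α - (-s) ^ α) * f r| ≤ C * |r * f r| := by
    intro r hr
    have h1 : t - s ≤ r - s := by linarith [hr.1]
    have h2 : t - s ≤ -s := by linarith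
    have h := hkey (r - s) (-s) h1 h2
    have hxy : r - s - -s = r := by ring
    rw [hxy] at h
    calc |((r - s) ^ α - (-s) ^ α) * f r|
        = |(r - s) ^ α - (-s) ^ α| * |f r| := abs_mul _ _
      _ ≤ (C * |r|) * |f r| := mul_le_mul_of_nonneg_right h (abs_nonneg _)
      _ = C * |r * f r| := by rw [abs_mul]; ring
  have hmeas : AEStronglyMeasurable (fun r => ((r - s) ^ α - (-s) ^ α) * f r)
      (volume.restrict (Set.Ioc t 0)) := by
    apply Measurable.aestronglyMeasurable
    apply Measurable.mul _ hf
    measurability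
  have hintC : MeasureTheory.IntegrableOn (fun r => C * |r * f r|) (Set.Ioc t 0) :=
    hint.const_mul C
  have hintg : MeasureTheory.IntegrableOn
      (fun r => ((r - s) ^ α - (-s) ^ α) * f r) (Set.Ioc t 0) := by
    refine hintC.mono' hmeas ?_
    filter_upwards [MeasureTheory.ae_restrict_mem measurableSet_Ioc] with r hr
    rw [Real.norm_eq_abs]; exact hbd r hr
  refine ⟨hintg, ?_⟩
  have hnorm : ‖∫ r in Set.Ioc t (0:ℝ), ((r - s) ^ α - (-s) ^ α) * f r‖
      ≤ ∫ r in Set.Ioc t (0:ℝ), C * |r * f r| := by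
    refine MeasureTheory.norm_integral_le_of_norm_le hintC ?_
    filter_upwards [MeasureTheory.ae_restrict_mem measurableSet_Ioc] with r hr
    rw [Real.norm_eq_abs]; exact hbd r hr
  rw [MeasureTheory.integral_const_mul] at hnorm
  calc |∫ r in Set.Ioc t (0:ℝ), ((r - s) ^ α - (-s) ^ α) * f r|
      ≤ C * ∫ r in Set.Ioc t (0:ℝ), |r * f r| := hnorm
    _ = |α| * (1 - t / s) ^ (α - 1) * |s| ^ (α - 1) *
        ∫ r in Set.Ioc t (0:ℝ), |r * f r| := by rw [hC, ← hconst]; ring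
end

section
/- Let α ∈ (−1/2, 0) ∪ (0, 1/2) and let ζ̃ satisfy α + 3/2 < ζ̃ < 2. Let f : (−∞, 0] → ℝ be continuous and suppose there exist M > 0 and x₀ < 0 with |f(x)| ≤ M |x|^{−ζ̃} for all x ≤ x₀. Then ∫_{−∞}^0 ( |s|^{α+1} ∫_0^1 ((1−r)^α − 1) f(sr) dr )² ds < ∞. -/
open MeasureTheory Set Filter

-- |(1-r)^α - 1| ≤ 2r for r ∈ [0,1/2], α ∈ [-1,1]
lemma aux_abs_le {α r : ℝ} (hα1 : -1 ≤ α) (hα2 : α ≤ 1)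
    (hr0 : 0 ≤ r) (hr : r ≤ 1/2) : |(1 - r) ^ α - 1| ≤ 2 * r := by
  have h1 : (0:ℝ) < 1 - r := by linarith
  have hle1 : (1:ℝ) - r ≤ 1 := by linarith
  have hup : (1 - r) ^ α ≤ (1 - r) ^ (-1 : ℝ) :=
    Real.rpow_le_rpow_of_exponent_ge h1 hle1 hα1
  have hlo : (1 - r) ^ (1:ℝ) ≤ (1 - r) ^ α :=
    Real.rpow_le_rpow_of_exponent_ge h1 hle1 hα2
  rw [Real.rpow_one] at hlo
  rw [Real.rpow_neg_one] at hup
  have hinv : (1 - r)⁻¹ * (1 - r) = 1 := inv_mul_cancel₀ h1.ne'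
  have h2 : (1 - r)⁻¹ ≤ 1 + 2 * r := by nlinarith [mul_nonneg hr0 (by linarith : (0:ℝ) ≤ 1 - 2*r)]
  rw [abs_le]
  constructor <;> nlinarith

lemma aux_int_one_sub_rpow {α : ℝ} (hα : -1 < α) :
    IntegrableOn (fun r : ℝ => (1 - r) ^ α) (Ioo 0 1) := by
  have h := intervalIntegral.intervalIntegrable_rpow' (a := 0) (b := 1) hα
  have h2 := (h.comp_sub_left 1).symm
  rw [show (1:ℝ) - 0 = 1 by ring, show (1:ℝ) - 1 = 0 by ring] at h2
  rw [intervalIntegrable_iff, uIoc_of_le (by norm_num : (0:ℝ) ≤ 1)] at h2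
  exact h2.mono_set Ioo_subset_Ioc_self

lemma aux_integrableOn_neg_rpow_Iio {p c : ℝ} (hp : p < -1) (hc : c < 0) :
    IntegrableOn (fun s : ℝ => (-s) ^ p) (Iio c) := by
  have h := integrableOn_Ioi_rpow_of_lt hp (show (0:ℝ) < -c by linarith)
  have h2 := (MeasurePreserving.integrableOn_comp_preimage
      (Measure.measurePreserving_neg (volume : Measure ℝ))
      (Homeomorph.neg ℝ).measurableEmbedding).2 h
  have hs : (Neg.neg ⁻¹' Ioi (-c) : Set ℝ) = Iio c := by
    ext x; simp [lt_neg]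
  rw [hs] at h2
  exact h2

-- continuity / measurability of r ↦ |(1-r)^α - 1| * r^(-z) on subsets of Ioo 0 1
lemma aux_contOn_G {α z : ℝ} (s : Set ℝ) (hs : s ⊆ Ioo 0 1) :
    ContinuousOn (fun r : ℝ => |(1 - r) ^ α - 1| * r ^ (-z)) s := by
  apply ContinuousOn.mul
  · apply ContinuousOn.abs
    apply ContinuousOn.sub _ continuousOn_const
    apply ContinuousOn.rpow_const (by fun_prop)
    intro x hx
    exact Or.inl (by have := hs hx; simp only [mem_Ioo] at this; intro h; linarith [this.2])
  · apply ContinuousOn.rpow_const (by fun_prop)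
    intro x hx
    exact Or.inl (by have := hs hx; simp only [mem_Ioo] at this; linarith [this.1])

lemma aux_int_G' {α z : ℝ} (hα1 : -1 ≤ α) (hα2 : α ≤ 1) (hαm : -1 < α)
    (hz : z < 2) (hz0 : 0 < z) :
    IntegrableOn (fun r : ℝ => |(1 - r) ^ α - 1| * r ^ (-z)) (Ioo 0 1) := by
  have hsub : Ioo (0:ℝ) 1 ⊆ Ioc 0 (1/2) ∪ Ioo (1/2) 1 := by
    intro x hx
    rcases le_or_gt x (1/2) with h | h
    · exact Or.inl ⟨hx.1, h⟩
    · exact Or.inr ⟨h, hx.2⟩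
  have hIoc : Ioc (0:ℝ) (1/2) ⊆ Ioo 0 1 := fun x hx => ⟨hx.1, by linarith [hx.2]⟩
  have hIoo : Ioo (1/2:ℝ) 1 ⊆ Ioo 0 1 := fun x hx => ⟨by linarith [hx.1], hx.2⟩
  have hp1 : IntegrableOn (fun r : ℝ => |(1 - r) ^ α - 1| * r ^ (-z)) (Ioc 0 (1/2)) := by
    have hg : IntegrableOn (fun r : ℝ => 2 * r ^ (1 - z)) (Ioc 0 (1/2)) := by
      have h := intervalIntegral.intervalIntegrable_rpow' (a := 0) (b := 1/2)
        (show -1 < 1 - z by linarith)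
      rw [intervalIntegrable_iff, uIoc_of_le (by norm_num : (0:ℝ) ≤ 1/2)] at h
      exact h.const_mul 2
    refine Integrable.mono hg ((aux_contOn_G _ hIoc).aestronglyMeasurable measurableSet_Ioc) ?_
    filter_upwards [ae_restrict_mem measurableSet_Ioc] with r hr
    have hr0 : 0 < r := hr.1
    have hrz : 0 ≤ r ^ (-z) := Real.rpow_nonneg hr0.le _
    have habs : |(1 - r) ^ α - 1| ≤ 2 * r := aux_abs_le hα1 hα2 hr0.le hr.2
    have key : |(1 - r) ^ α - 1| * r ^ (-z) ≤ 2 * r ^ (1 - z) := by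
      have : (2 * r) * r ^ (-z) = 2 * r ^ (1 - z) := by
        rw [show (1:ℝ) - z = 1 + (-z) by ring, Real.rpow_add hr0, Real.rpow_one]; ring
      calc |(1 - r) ^ α - 1| * r ^ (-z) ≤ (2 * r) * r ^ (-z) :=
            mul_le_mul_of_nonneg_right habs hrz
        _ = 2 * r ^ (1 - z) := this
    have h1 : (0:ℝ) ≤ |(1 - r) ^ α - 1| * r ^ (-z) := mul_nonneg (abs_nonneg _) hrz
    simp only [Real.norm_eq_abs, abs_of_nonneg h1]
    refine key.trans (le_abs_self _)
  have hp2 : IntegrableOn (fun r : ℝ => |(1 - r) ^ α - 1| * r ^ (-z)) (Ioo (1/2) 1) := by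
    have hg : IntegrableOn (fun r : ℝ => ((1 - r) ^ α + 1) * 2 ^ z) (Ioo (1/2) 1) := by
      refine Integrable.mul_const ?_ _
      exact ((aux_int_one_sub_rpow hαm).mono_set hIoo).add
        (integrableOn_const measure_Ioo_lt_top.ne)
    refine Integrable.mono hg ((aux_contOn_G _ hIoo).aestronglyMeasurable measurableSet_Ioo) ?_
    filter_upwards [ae_restrict_mem measurableSet_Ioo] with r hr
    have hr0 : (0:ℝ) < 1 - r := by linarith [hr.2]
    have hpow : (0:ℝ) ≤ (1 - r) ^ α := Real.rpow_nonneg hr0.le _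
    have habs : |(1 - r) ^ α - 1| ≤ (1 - r) ^ α + 1 := by
      rw [abs_le]; constructor <;> linarith
    have hrz : r ^ (-z) ≤ (1/2:ℝ) ^ (-z) :=
      Real.rpow_le_rpow_of_nonpos (by norm_num) hr.1.le (by linarith)
    have h2z : (1/2:ℝ) ^ (-z) = 2 ^ z := by
      rw [one_div, Real.inv_rpow (by norm_num), ← Real.rpow_neg (by norm_num), neg_neg]
    have h1 : (0:ℝ) ≤ |(1 - r) ^ α - 1| * r ^ (-z) :=
      mul_nonneg (abs_nonneg _) (Real.rpow_nonneg (by linarith [hr.1] : (0:ℝ) ≤ r) _)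
    simp only [Real.norm_eq_abs, abs_of_nonneg h1]
    refine le_trans ?_ (le_abs_self _)
    calc |(1 - r) ^ α - 1| * r ^ (-z) ≤ ((1 - r) ^ α + 1) * ((1/2:ℝ) ^ (-z)) := by
          apply mul_le_mul habs hrz (Real.rpow_nonneg (by linarith [hr.1]) _) (by linarith)
      _ = ((1 - r) ^ α + 1) * 2 ^ z := by rw [h2z]
  exact (hp1.union hp2).mono_set hsub

set_option maxHeartbeats 1000000 in
/-- Let `α ∈ (−1/2,0) ∪ (0,1/2)` and `α + 3/2 < ζ̃ < 2`. Let `f` be continuous on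
`(−∞,0]` and suppose there exist `M > 0` and `x₀ < 0` with `|f(x)| ≤ M |x|^{−ζ̃}`
for all `x ≤ x₀`. Then
`∫_{−∞}^0 (|s|^{α+1} ∫_0^1 ((1−r)^α − 1) f(sr) dr)² ds < ∞`. -/
theorem stmt11 (α z : ℝ) (hα : α ∈ Set.Ioo (-(1/2) : ℝ) (1/2)) (hα0 : α ≠ 0)
    (hz1 : α + 3/2 < z) (hz2 : z < 2)
    (f : ℝ → ℝ) (hf : ContinuousOn f (Set.Iic 0))
    (M x₀ : ℝ) (hM : 0 < M) (hx₀ : x₀ < 0)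
    (hbd : ∀ x ≤ x₀, |f x| ≤ M * |x| ^ (-z)) :
    MeasureTheory.IntegrableOn
      (fun s => (|s| ^ (α + 1) * ∫ r in Set.Ioo (0 : ℝ) 1, ((1 - r) ^ α - 1) * f (s * r)) ^ 2)
      (Set.Iio (0 : ℝ)) := by
  obtain ⟨hαl, hαr⟩ := hα
  have hαa : -1 ≤ α := by linarith
  have hαb : α ≤ 1 := by linarith
  have hαm : -1 < α := by linarith
  have hz0 : 0 < z := by linarith
  -- measurability of the inner integrand
  have hmeas : ∀ s : ℝ, s < 0 → AEStronglyMeasurable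
      (fun r => ((1 - r) ^ α - 1) * f (s * r)) (volume.restrict (Ioo 0 1)) := by
    intro s hs
    apply ContinuousOn.aestronglyMeasurable _ measurableSet_Ioo
    apply ContinuousOn.mul
    · apply ContinuousOn.sub _ continuousOn_const
      apply ContinuousOn.rpow_const (by fun_prop)
      intro x hx
      exact Or.inl (fun h => by simp only [mem_Ioo] at hx; linarith [hx.2])
    · apply hf.comp (by fun_prop : ContinuousOn (fun r : ℝ => s * r) (Ioo 0 1))
      intro r hr
      exact (mul_neg_of_neg_of_pos hs hr.1).le
  -- integrability of |(1-r)^α - 1|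
  have hA : IntegrableOn (fun r : ℝ => |(1 - r) ^ α - 1|) (Ioo 0 1) :=
    ((aux_int_one_sub_rpow hαm).sub
      (integrableOn_const measure_Ioo_lt_top.ne)).abs
  set A := ∫ r in Ioo (0:ℝ) 1, |(1 - r) ^ α - 1| with hA_def
  have hA0 : 0 ≤ A := setIntegral_nonneg measurableSet_Ioo (fun r _ => abs_nonneg _)
  -- continuity of the inner integral on Iio 0
  have hI_cont : ContinuousOn
      (fun s => ∫ r in Ioo (0:ℝ) 1, ((1 - r) ^ α - 1) * f (s * r)) (Iio 0) := by
    intro s₀ hs₀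
    simp only [mem_Iio] at hs₀
    apply ContinuousAt.continuousWithinAt
    obtain ⟨C, hC⟩ := (isCompact_Icc (a := s₀ - 1) (b := 0)).exists_bound_of_continuousOn
      (hf.mono (fun x hx => hx.2))
    have hnb : Ioo (s₀ - 1) 0 ∈ nhds s₀ := Ioo_mem_nhds (by linarith) hs₀
    apply continuousAt_of_dominated (bound := fun r : ℝ => |(1 - r) ^ α - 1| * C)
    · filter_upwards [hnb] with s hs
      exact hmeas s hs.2
    · filter_upwards [hnb] with s hs
      filter_upwards [ae_restrict_mem measurableSet_Ioo] with r hr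
      have hsr0 : s * r ≤ 0 := (mul_neg_of_neg_of_pos hs.2 hr.1).le
      have hsr1 : s₀ - 1 ≤ s * r := by nlinarith [hr.1, hr.2, hs.1, hs.2]
      have := hC (s * r) ⟨hsr1, hsr0⟩
      rw [norm_mul]
      exact mul_le_mul_of_nonneg_left this (norm_nonneg _)
    · exact hA.mul_const C
    · filter_upwards [ae_restrict_mem measurableSet_Ioo] with r hr
      have h2 : ContinuousAt f (s₀ * r) :=
        (hf (s₀ * r) (mul_neg_of_neg_of_pos hs₀ hr.1).le).continuousAt
          (Iic_mem_nhds (mul_neg_of_neg_of_pos hs₀ hr.1))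
      have h1 : ContinuousAt (fun s : ℝ => s * r) s₀ := (continuous_mul_right r).continuousAt
      exact continuousAt_const.mul
        (show ContinuousAt (fun s : ℝ => f (s * r)) s₀ from ContinuousAt.comp h2 h1)
  -- continuity of the full integrand on Iio 0
  have hΦ : ContinuousOn
      (fun s => (|s| ^ (α + 1) * ∫ r in Ioo (0:ℝ) 1, ((1 - r) ^ α - 1) * f (s * r)) ^ 2)
      (Iio 0) := by
    apply ContinuousOn.pow
    apply ContinuousOn.mul _ hI_cont
    apply ContinuousOn.rpow_const continuous_abs.continuousOn
    intro x hx
    exact Or.inl (abs_ne_zero.2 (ne_of_lt hx))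
  -- the cut point
  set s₁ : ℝ := min (2 * x₀) (-1) with hs₁_def
  have hs₁0 : s₁ < 0 := lt_of_le_of_lt (min_le_right _ _) (by norm_num)
  have hs₁a : s₁ ≤ 2 * x₀ := min_le_left _ _
  have hs₁b : s₁ ≤ -1 := min_le_right _ _
  -- bound for f on [s₁, 0]
  obtain ⟨C, hC⟩ := (isCompact_Icc (a := s₁) (b := 0)).exists_bound_of_continuousOn
    (hf.mono (fun x hx => hx.2))
  have hC0 : 0 ≤ C := (norm_nonneg (f 0)).trans (hC 0 ⟨hs₁0.le, le_refl 0⟩)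
  -- the weighted integrability constant
  have hG : IntegrableOn (fun r : ℝ => |(1 - r) ^ α - 1| * r ^ (-z)) (Ioo 0 1) :=
    aux_int_G' hαa hαb hαm hz2 hz0
  set B := ∫ r in Ioo (0:ℝ) 1, |(1 - r) ^ α - 1| * r ^ (-z) with hB_def
  have hB0 : 0 ≤ B := setIntegral_nonneg measurableSet_Ioo
    (fun r hr => mul_nonneg (abs_nonneg _) (Real.rpow_nonneg hr.1.le _))
  set K : ℝ := 2 * C * x₀ ^ 2 + M * B with hK_def
  have hK0 : 0 ≤ K := by positivity
  -- the key estimate for s ≤ s₁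
  have key : ∀ s : ℝ, s ≤ s₁ →
      |∫ r in Ioo (0:ℝ) 1, ((1 - r) ^ α - 1) * f (s * r)| ≤ K * (-s) ^ (-z) := by
    intro s hs
    have hsneg : s < 0 := lt_of_le_of_lt hs hs₁0
    have hs2 : s ≤ 2 * x₀ := hs.trans hs₁a
    have hns : 1 ≤ -s := by linarith [hs.trans hs₁b]
    have hnspos : (0:ℝ) < -s := by linarith
    set u : ℝ := x₀ / s with hu_def
    have hu0 : 0 < u := div_pos_of_neg_of_neg hx₀ hsneg
    have hu2 : u ≤ 1 / 2 := by
      rw [hu_def, div_le_iff_of_neg hsneg]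
      linarith
    have hu1 : u < 1 := by linarith
    have hsu : s * u = x₀ := by
      rw [hu_def, mul_div_cancel₀ _ (ne_of_lt hsneg)]
    have hset : Ioo (0:ℝ) 1 = Ioo 0 u ∪ Ico u 1 :=
      (Ioo_union_Ico_eq_Ioo hu0 (by linarith)).symm
    have hIoou : Ioo (0:ℝ) u ⊆ Ioo 0 1 := fun x hx => ⟨hx.1, hx.2.trans hu1⟩
    have hIcou : Ico u 1 ⊆ Ioo (0:ℝ) 1 := fun x hx => ⟨lt_of_lt_of_le hu0 hx.1, hx.2⟩
    -- pointwise bound on the first piece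
    have hb1 : ∀ r ∈ Ioo (0:ℝ) u,
        ‖((1 - r) ^ α - 1) * f (s * r)‖ ≤ 2 * u * C := by
      intro r hr
      have hr1 : r ≤ 1/2 := by linarith [hr.2]
      have h1 : |(1 - r) ^ α - 1| ≤ 2 * r := aux_abs_le hαa hαb hr.1.le hr1
      have hsr0 : s * r ≤ 0 := (mul_neg_of_neg_of_pos hsneg hr.1).le
      have hsrx : s₁ ≤ s * r := by
        have : x₀ < s * r := by
          rw [← hsu]
          exact (mul_lt_mul_left_of_neg hsneg).2 hr.2
        linarith
      have h2 : ‖f (s * r)‖ ≤ C := hC (s * r) ⟨hsrx, hsr0⟩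
      rw [norm_mul]
      calc ‖(1 - r) ^ α - 1‖ * ‖f (s * r)‖ ≤ (2 * r) * C := by
            apply mul_le_mul _ h2 (norm_nonneg _) (by linarith [hr.1, hr.2, hu2])
            simpa using h1
        _ ≤ 2 * u * C := by nlinarith [hr.2]
    -- integrability on the first piece
    have Int1 : IntegrableOn (fun r => ((1 - r) ^ α - 1) * f (s * r)) (Ioo 0 u) := by
      have hconst : IntegrableOn (fun _ : ℝ => 2 * u * C) (Ioo 0 u) :=
        integrableOn_const measure_Ioo_lt_top.ne
      refine Integrable.mono hconst ?_ ?_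
      · exact (hmeas s hsneg).mono_measure (Measure.restrict_mono hIoou le_rfl)
      · filter_upwards [ae_restrict_mem measurableSet_Ioo] with r hr
        refine (hb1 r hr).trans ?_
        rw [Real.norm_eq_abs]
        exact le_abs_self _
    -- pointwise bound on the second piece
    have hb2 : ∀ r ∈ Ico u (1:ℝ),
        ‖((1 - r) ^ α - 1) * f (s * r)‖ ≤
          (M * (-s) ^ (-z)) * (|(1 - r) ^ α - 1| * r ^ (-z)) := by
      intro r hr
      have hr0 : 0 < r := lt_of_lt_of_le hu0 hr.1
      have hsrx : s * r ≤ x₀ := by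
        rw [← hsu]
        exact (mul_le_mul_left_of_neg hsneg).2 hr.1
      have h2 : |f (s * r)| ≤ M * |s * r| ^ (-z) := hbd (s * r) hsrx
      have habs : |s * r| = (-s) * r := by
        rw [abs_mul, abs_of_neg hsneg, abs_of_pos hr0]
      have hmul : ((-s) * r) ^ (-z) = (-s) ^ (-z) * r ^ (-z) :=
        Real.mul_rpow hnspos.le hr0.le
      rw [norm_mul]
      calc ‖(1 - r) ^ α - 1‖ * ‖f (s * r)‖
          ≤ |(1 - r) ^ α - 1| * (M * ((-s) ^ (-z) * r ^ (-z))) := by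
            apply mul_le_mul_of_nonneg_left _ (abs_nonneg _)
            rw [Real.norm_eq_abs]
            calc |f (s * r)| ≤ M * |s * r| ^ (-z) := h2
              _ = M * ((-s) ^ (-z) * r ^ (-z)) := by rw [habs, hmul]
        _ = (M * (-s) ^ (-z)) * (|(1 - r) ^ α - 1| * r ^ (-z)) := by ring
    -- integrability on the second piece
    have hGint : IntegrableOn
        (fun r : ℝ => (M * (-s) ^ (-z)) * (|(1 - r) ^ α - 1| * r ^ (-z))) (Ico u 1) :=
      (hG.mono_set hIcou).const_mul _
    have Int2 : IntegrableOn (fun r => ((1 - r) ^ α - 1) * f (s * r)) (Ico u 1) := by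
      refine Integrable.mono hGint ?_ ?_
      · exact (hmeas s hsneg).mono_measure (Measure.restrict_mono hIcou le_rfl)
      · filter_upwards [ae_restrict_mem measurableSet_Ico] with r hr
        refine (hb2 r hr).trans ?_
        rw [Real.norm_eq_abs]
        exact le_abs_self _
    -- splitting the integral
    have hsplit : ∫ r in Ioo (0:ℝ) 1, ((1 - r) ^ α - 1) * f (s * r)
        = (∫ r in Ioo (0:ℝ) u, ((1 - r) ^ α - 1) * f (s * r))
          + ∫ r in Ico u (1:ℝ), ((1 - r) ^ α - 1) * f (s * r) := by
      rw [hset]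
      apply setIntegral_union _ measurableSet_Ico Int1 Int2
      rw [Set.disjoint_left]
      rintro x ⟨_, h1⟩ ⟨h2, _⟩
      exact absurd h2 (not_le.2 h1)
    -- bounding the first piece
    have hbnd1 : ‖∫ r in Ioo (0:ℝ) u, ((1 - r) ^ α - 1) * f (s * r)‖
        ≤ (2 * u * C) * u := by
      have := norm_setIntegral_le_of_norm_le_const (μ := volume) (s := Ioo 0 u)
        (by exact measure_Ioo_lt_top) hb1
      rwa [Measure.real_def, Real.volume_Ioo, sub_zero, ENNReal.toReal_ofReal hu0.le] at this
    -- bounding the second piece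
    have hbnd2 : ‖∫ r in Ico u (1:ℝ), ((1 - r) ^ α - 1) * f (s * r)‖
        ≤ (M * (-s) ^ (-z)) * B := by
      have h1 : ‖∫ r in Ico u (1:ℝ), ((1 - r) ^ α - 1) * f (s * r)‖
          ≤ ∫ r in Ico u (1:ℝ), (M * (-s) ^ (-z)) * (|(1 - r) ^ α - 1| * r ^ (-z)) := by
        apply norm_integral_le_of_norm_le hGint
        filter_upwards [ae_restrict_mem measurableSet_Ico] with r hr
        exact hb2 r hr
      refine h1.trans ?_
      rw [integral_const_mul]
      apply mul_le_mul_of_nonneg_left _ (by positivity)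
      apply setIntegral_mono_set hG
      · filter_upwards [ae_restrict_mem measurableSet_Ioo] with r hr
        exact mul_nonneg (abs_nonneg _) (Real.rpow_nonneg hr.1.le _)
      · exact HasSubset.Subset.eventuallyLE hIcou
    -- putting the pieces together
    have hu_sq : (2 * u * C) * u ≤ 2 * C * x₀ ^ 2 * (-s) ^ (-z) := by
      have e1 : (-s) ^ (-2:ℝ) ≤ (-s) ^ (-z) :=
        Real.rpow_le_rpow_of_exponent_le hns (by linarith)
      have e2 : (-s) ^ (-2:ℝ) = (s ^ 2)⁻¹ := by
        rw [show (-2:ℝ) = -(2:ℝ) by norm_num, Real.rpow_neg hnspos.le]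
        congr 1
        rw [show (2:ℝ) = ((2:ℕ):ℝ) by norm_num, Real.rpow_natCast]
        ring
      have e3 : (2 * u * C) * u = 2 * C * (x₀ ^ 2 * (s ^ 2)⁻¹) := by
        rw [hu_def]
        field_simp
      rw [e3, ← e2]
      have : x₀ ^ 2 * (-s) ^ (-2:ℝ) ≤ x₀ ^ 2 * (-s) ^ (-z) :=
        mul_le_mul_of_nonneg_left e1 (sq_nonneg _)
      nlinarith
    calc |∫ r in Ioo (0:ℝ) 1, ((1 - r) ^ α - 1) * f (s * r)|
        ≤ ‖∫ r in Ioo (0:ℝ) u, ((1 - r) ^ α - 1) * f (s * r)‖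
          + ‖∫ r in Ico u (1:ℝ), ((1 - r) ^ α - 1) * f (s * r)‖ := by
          rw [hsplit]; exact abs_add_le _ _
      _ ≤ (2 * u * C) * u + (M * (-s) ^ (-z)) * B := add_le_add hbnd1 hbnd2
      _ ≤ 2 * C * x₀ ^ 2 * (-s) ^ (-z) + (M * (-s) ^ (-z)) * B :=
          add_le_add hu_sq le_rfl
      _ = K * (-s) ^ (-z) := by rw [hK_def]; ring
  -- integrability near -∞
  have part1 : IntegrableOn
      (fun s => (|s| ^ (α + 1) * ∫ r in Ioo (0:ℝ) 1, ((1 - r) ^ α - 1) * f (s * r)) ^ 2)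
      (Iio s₁) := by
    have hmaj : IntegrableOn (fun s : ℝ => K ^ 2 * (-s) ^ (2 * (α + 1 - z))) (Iio s₁) :=
      (aux_integrableOn_neg_rpow_Iio (by linarith) hs₁0).const_mul _
    refine Integrable.mono hmaj ?_ ?_
    · exact (hΦ.aestronglyMeasurable measurableSet_Iio).mono_measure
        (Measure.restrict_mono (fun x hx => lt_trans hx hs₁0) le_rfl)
    · filter_upwards [ae_restrict_mem measurableSet_Iio] with s hs
      have hsneg : s < 0 := lt_trans hs hs₁0
      have hnspos : (0:ℝ) < -s := by linarith
      have habs : |s| = -s := abs_of_neg hsneg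
      have hIb := key s hs.le
      have hrz : (0:ℝ) ≤ (-s) ^ (-z) := Real.rpow_nonneg hnspos.le _
      have hsq : (∫ r in Ioo (0:ℝ) 1, ((1 - r) ^ α - 1) * f (s * r)) ^ 2
          ≤ (K * (-s) ^ (-z)) ^ 2 := by
        rw [← sq_abs]
        apply pow_le_pow_left₀ (abs_nonneg _) hIb
      have hmain : (|s| ^ (α + 1) * ∫ r in Ioo (0:ℝ) 1, ((1 - r) ^ α - 1) * f (s * r)) ^ 2
          ≤ K ^ 2 * (-s) ^ (2 * (α + 1 - z)) := by
        rw [mul_pow, habs]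
        have e : ((-s) ^ (α + 1)) ^ 2 * ((-s) ^ (-z)) ^ 2 = (-s) ^ (2 * (α + 1 - z)) := by
          rw [← Real.rpow_natCast ((-s) ^ (α + 1)) 2, ← Real.rpow_natCast ((-s) ^ (-z)) 2,
            ← Real.rpow_mul hnspos.le, ← Real.rpow_mul hnspos.le,
            ← Real.rpow_add hnspos]
          norm_num
          ring_nf
        calc ((-s) ^ (α + 1)) ^ 2 * (∫ r in Ioo (0:ℝ) 1, ((1 - r) ^ α - 1) * f (s * r)) ^ 2
            ≤ ((-s) ^ (α + 1)) ^ 2 * (K * (-s) ^ (-z)) ^ 2 :=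
              mul_le_mul_of_nonneg_left hsq (sq_nonneg _)
          _ = K ^ 2 * (((-s) ^ (α + 1)) ^ 2 * ((-s) ^ (-z)) ^ 2) := by ring
          _ = K ^ 2 * (-s) ^ (2 * (α + 1 - z)) := by rw [e]
      rw [Real.norm_eq_abs, Real.norm_eq_abs, abs_of_nonneg (sq_nonneg _),
        abs_of_nonneg (by positivity : (0:ℝ) ≤ K ^ 2 * (-s) ^ (2 * (α + 1 - z)))]
      exact hmain
  -- integrability near 0
  have part2 : IntegrableOn
      (fun s => (|s| ^ (α + 1) * ∫ r in Ioo (0:ℝ) 1, ((1 - r) ^ α - 1) * f (s * r)) ^ 2)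
      (Ico s₁ 0) := by
    have hconst : IntegrableOn (fun _ : ℝ => ((-s₁) ^ (α + 1) * (A * C)) ^ 2) (Ico s₁ 0) :=
      integrableOn_const measure_Ico_lt_top.ne
    refine Integrable.mono hconst ?_ ?_
    · exact (hΦ.aestronglyMeasurable measurableSet_Iio).mono_measure
        (Measure.restrict_mono (fun x hx => hx.2) le_rfl)
    · filter_upwards [ae_restrict_mem measurableSet_Ico] with s hs
      have hsneg : s < 0 := hs.2
      have hIb : |∫ r in Ioo (0:ℝ) 1, ((1 - r) ^ α - 1) * f (s * r)| ≤ A * C := by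
        have h1 : ‖∫ r in Ioo (0:ℝ) 1, ((1 - r) ^ α - 1) * f (s * r)‖
            ≤ ∫ r in Ioo (0:ℝ) 1, |(1 - r) ^ α - 1| * C := by
          apply norm_integral_le_of_norm_le (hA.mul_const C)
          filter_upwards [ae_restrict_mem measurableSet_Ioo] with r hr
          have hsr0 : s * r ≤ 0 := (mul_neg_of_neg_of_pos hsneg hr.1).le
          have hsrx : s₁ ≤ s * r := by nlinarith [hr.1, hr.2, hs.1, hs.2]
          rw [norm_mul]
          apply mul_le_mul_of_nonneg_left (hC (s * r) ⟨hsrx, hsr0⟩) (norm_nonneg _)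
        rw [Real.norm_eq_abs] at h1
        refine h1.trans ?_
        rw [← integral_mul_const]
      have habs : |s| ≤ -s₁ := by
        rw [abs_of_neg hsneg]; linarith [hs.1]
      have hpow : |s| ^ (α + 1) ≤ (-s₁) ^ (α + 1) :=
        Real.rpow_le_rpow (abs_nonneg _) habs (by linarith)
      have hpow0 : (0:ℝ) ≤ |s| ^ (α + 1) := Real.rpow_nonneg (abs_nonneg _) _
      have key2 : (|s| ^ (α + 1) * ∫ r in Ioo (0:ℝ) 1, ((1 - r) ^ α - 1) * f (s * r)) ^ 2
          ≤ ((-s₁) ^ (α + 1) * (A * C)) ^ 2 := by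
        have e : (|s| ^ (α + 1) * ∫ r in Ioo (0:ℝ) 1, ((1 - r) ^ α - 1) * f (s * r)) ^ 2
            = (|s| ^ (α + 1) * |∫ r in Ioo (0:ℝ) 1, ((1 - r) ^ α - 1) * f (s * r)|) ^ 2 := by
          rw [mul_pow, mul_pow, sq_abs]
        rw [e]
        apply pow_le_pow_left₀ (mul_nonneg hpow0 (abs_nonneg _))
        exact mul_le_mul hpow hIb (abs_nonneg _) (Real.rpow_nonneg (by linarith) _)
      rw [Real.norm_eq_abs, Real.norm_eq_abs,
        abs_of_nonneg (sq_nonneg (|s| ^ (α + 1) * ∫ r in Ioo (0:ℝ) 1, ((1 - r) ^ α - 1) * f (s * r))),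
        abs_of_nonneg (sq_nonneg ((-s₁) ^ (α + 1) * (A * C)))]
      exact key2
  have := part1.union part2
  rwa [Iio_union_Ico_eq_Iio hs₁0.le] at this
end
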